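/- arXiv:2207.14559 — 15 statements merged into one kernel-verified Lean document; each statement's English description precedes it below -/
import Mathlib

section
/- If (μₙ), (αₙ), (βₙ), (γₙ) are sequences of nonnegative reals satisfying μ_{n+1} ≤ μₙ − αₙβₙ + γₙ for all n, with ∑αᵢ = ∞ and ∑γᵢ < ∞, then there exists a subsequence (β_{lₙ}) with β_{lₙ} → 0. -/
/-!
If `β n > ε` for all `n ≥ N`, then from `N` on the recursion reads
`μ (n + 1) ≤ μ n - ε * α n + γ n`; telescoping and `μ ≥ 0` bound the partial sums of `ε * α`
by `μ N + ∑ γ`, so `∑ α` would converge.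
-/

open Filter Finset

theorem add_sum_range_le_of_le_sub_add {μ a γ : ℕ → ℝ} (h : ∀ n, μ (n + 1) ≤ μ n - a n + γ n)
    (m : ℕ) : μ m + ∑ i ∈ range m, a i ≤ μ 0 + ∑ i ∈ range m, γ i := by
  induction m with
  | zero => simp
  | succ m ih =>
    rw [sum_range_succ, sum_range_succ]
    linarith [h m]

theorem summable_of_le_sub_add {μ a γ : ℕ → ℝ} (hμ : ∀ n, 0 ≤ μ n) (ha : ∀ n, 0 ≤ a n)
    (hγ : ∀ n, 0 ≤ γ n) (hsum : Summable γ) (h : ∀ n, μ (n + 1) ≤ μ n - a n + γ n) :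
    Summable a :=
  summable_of_sum_range_le (c := μ 0 + ∑' i, γ i) ha fun m => by
    linarith [add_sum_range_le_of_le_sub_add h m, hμ m,
      hsum.sum_le_tsum (range m) fun i _ => hγ i]

theorem stmt0_general (μ α β γ : ℕ → ℝ)
    (hμ : ∀ n, 0 ≤ μ n) (hα : ∀ n, 0 ≤ α n) (hγ : ∀ n, 0 ≤ γ n)
    (hrec : ∀ n, μ (n + 1) ≤ μ n - α n * β n + γ n)
    (hdiv : Tendsto (fun n => ∑ i ∈ Finset.range n, α i) atTop atTop)
    (hsum : Summable γ) :
    ∀ ε : ℝ, 0 < ε → ∀ N : ℕ, ∃ n ≥ N, β n ≤ ε := by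
  intro ε hε N
  by_contra! hβ
  have hrec_tail : ∀ n, μ (n + 1 + N) ≤ μ (n + N) - ε * α (n + N) + γ (n + N) := fun n => by
    have hαβ : α (n + N) * ε ≤ α (n + N) * β (n + N) :=
      mul_le_mul_of_nonneg_left (hβ _ (Nat.le_add_left N n)).le (hα _)
    rw [add_right_comm]
    linarith [hrec (n + N)]
  have htail : Summable fun n => ε * α (n + N) :=
    summable_of_le_sub_add (μ := fun n => μ (n + N)) (fun n => hμ _)
      (fun n => mul_nonneg hε.le (hα _)) (fun n => hγ _) ((summable_nat_add_iff N).2 hsum) hrec_tail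
  have hα_summable : Summable α :=
    (summable_nat_add_iff N).1 ((summable_mul_left_iff hε.ne').1 htail)
  exact (not_summable_iff_tendsto_nat_atTop_of_nonneg hα).2 hdiv hα_summable

/-- If (μₙ), (αₙ), (βₙ), (γₙ) are nonnegative real sequences with
μ_{n+1} ≤ μₙ − αₙβₙ + γₙ, ∑αᵢ = ∞ and ∑γᵢ < ∞, then some subsequence of (βₙ)
tends to 0: for every ε > 0 and every N there is n ≥ N with βₙ ≤ ε. -/
theorem stmt0 (μ α β γ : ℕ → ℝ)
    (hμ : ∀ n, 0 ≤ μ n) (hα : ∀ n, 0 ≤ α n) (hβ : ∀ n, 0 ≤ β n) (hγ : ∀ n, 0 ≤ γ n)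
    (hrec : ∀ n, μ (n + 1) ≤ μ n - α n * β n + γ n)
    (hdiv : Tendsto (fun n => ∑ i ∈ Finset.range n, α i) atTop atTop)
    (hsum : Summable γ) :
    ∀ ε : ℝ, 0 < ε → ∀ N : ℕ, ∃ n ≥ N, β n ≤ ε :=
  stmt0_general μ α β γ hμ hα hγ hrec hdiv hsum
end

section
/- If (μₙ), (αₙ), (βₙ), (γₙ) are sequences of nonnegative reals satisfying μ_{n+1} ≤ μₙ − αₙβₙ + γₙ for all n, with ∑αᵢ = ∞ and γₙ/αₙ → 0 (where αₙ > 0 for all n), then lim inf βₙ = 0. -/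
open Filter Finset

/-- If (μₙ), (αₙ), (βₙ), (γₙ) are nonnegative real sequences with αₙ > 0,
μ_{n+1} ≤ μₙ − αₙβₙ + γₙ, ∑αᵢ = ∞ and γₙ/αₙ → 0, then lim inf βₙ = 0. -/
theorem stmt1 (μ α β γ : ℕ → ℝ)
    (hμ : ∀ n, 0 ≤ μ n) (hα : ∀ n, 0 < α n) (hβ : ∀ n, 0 ≤ β n) (hγ : ∀ n, 0 ≤ γ n)
    (hrec : ∀ n, μ (n + 1) ≤ μ n - α n * β n + γ n)
    (hdiv : Tendsto (fun n => ∑ i ∈ Finset.range n, α i) atTop atTop)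
    (hquot : Tendsto (fun n => γ n / α n) atTop (nhds 0)) :
    Filter.liminf β atTop = 0 := by
  have hfreq : ∀ ε > (0:ℝ), ∃ᶠ n in atTop, β n < ε := by
    intro ε hε
    by_contra h
    rw [not_frequently] at h
    have hsmall : ∀ᶠ n in atTop, γ n / α n < ε / 2 :=
      hquot.eventually (eventually_lt_nhds (half_pos hε))
    obtain ⟨N, hN⟩ := eventually_atTop.1 (h.and hsmall)
    -- for n ≥ N : μ (n+1) ≤ μ n - (ε/2) * α n
    have step : ∀ n, N ≤ n → μ (n + 1) ≤ μ n - ε / 2 * α n := by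
      intro n hn
      obtain ⟨hb, hg⟩ := hN n hn
      have hβn : ε ≤ β n := not_lt.1 hb
      have hγn : γ n < α n * (ε / 2) := by
        have := (div_lt_iff₀ (hα n)).1 hg
        linarith
      have h1 : α n * ε ≤ α n * β n := by
        exact mul_le_mul_of_nonneg_left hβn (hα n).le
      calc μ (n + 1) ≤ μ n - α n * β n + γ n := hrec n
        _ ≤ μ n - α n * ε + α n * (ε / 2) := by nlinarith
        _ = μ n - ε / 2 * α n := by ring
    have claim : ∀ m, μ (N + m) + ε / 2 *
        ((∑ i ∈ Finset.range (N + m), α i) - ∑ i ∈ Finset.range N, α i) ≤ μ N := by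
      intro m
      induction m with
      | zero => simp
      | succ m ih =>
        have := step (N + m) (Nat.le_add_right _ _)
        rw [show N + (m + 1) = (N + m) + 1 from rfl, Finset.sum_range_succ]
        linarith
    have hbound : ∀ n, N ≤ n →
        (∑ i ∈ Finset.range n, α i) ≤ (∑ i ∈ Finset.range N, α i) + 2 * μ N / ε := by
      intro n hn
      obtain ⟨m, rfl⟩ := Nat.exists_eq_add_of_le hn
      have := claim m
      have hμ' := hμ (N + m)
      have h2 : ε / 2 * ((∑ i ∈ Finset.range (N + m), α i) - ∑ i ∈ Finset.range N, α i)
          ≤ μ N := by linarith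
      have h3 : (∑ i ∈ Finset.range (N + m), α i) - ∑ i ∈ Finset.range N, α i
          ≤ 2 * μ N / ε := by
        rw [le_div_iff₀ hε]; nlinarith
      linarith
    obtain ⟨n, hn1, hn2⟩ :=
      ((hdiv.eventually (eventually_gt_atTop
        ((∑ i ∈ Finset.range N, α i) + 2 * μ N / ε))).and (eventually_ge_atTop N)).exists
    exact absurd (hbound n hn2) (not_le.2 hn1)
  have hbdd : IsBoundedUnder (· ≥ ·) atTop β := ⟨0, eventually_map.mpr (Eventually.of_forall hβ)⟩
  have hcobdd : IsCoboundedUnder (· ≥ ·) atTop β :=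
    IsCoboundedUnder.of_frequently_le ((hfreq 1 one_pos).mono fun n h => h.le)
  refine le_antisymm ?_ ?_
  · refine le_of_forall_pos_le_add fun ε hε => ?_
    have := liminf_le_of_frequently_le ((hfreq ε hε).mono fun n h => h.le) hbdd
    linarith
  · exact le_liminf_of_le hcobdd (Eventually.of_forall hβ)
end

section
/- Suppose (αₙ) and (βₙ) are sequences of nonnegative reals with ∑αᵢ = ∞, ∑αᵢβᵢ < ∞, and there exists θ > 0 with βₙ − β_{n+1} ≤ θαₙ for all n. Then βₙ → 0. -/
open Filter Finset

/-- If (αₙ) and (βₙ) are nonnegative real sequences with ∑αᵢ = ∞,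
∑αᵢβᵢ < ∞ and βₙ − β_{n+1} ≤ θαₙ for some θ > 0 and all n, then βₙ → 0. -/
theorem stmt4 (α β : ℕ → ℝ) (θ : ℝ)
    (hα : ∀ n, 0 ≤ α n) (hβ : ∀ n, 0 ≤ β n)
    (hdiv : Tendsto (fun n => ∑ i ∈ Finset.range n, α i) atTop atTop)
    (hsum : Summable (fun i => α i * β i))
    (hθ : 0 < θ)
    (hreg : ∀ n, β n - β (n + 1) ≤ θ * α n) :
    Tendsto β atTop (nhds 0) := by
  rw [Metric.tendsto_atTop]
  intro ε hε
  have hδ : 0 < ε ^ 2 / (4 * θ) := by positivity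
  have hC : CauchySeq (fun n => ∑ i ∈ Finset.range n, α i * β i) :=
    hsum.hasSum.tendsto_sum_nat.cauchySeq
  rw [Metric.cauchySeq_iff] at hC
  obtain ⟨N, hN⟩ := hC _ hδ
  refine ⟨N, fun n hn => ?_⟩
  rw [Real.dist_eq, sub_zero, abs_of_nonneg (hβ n)]
  by_contra hcon
  push_neg at hcon
  have hε2θ : 0 < ε / (2 * θ) := by positivity
  have hEx : ∃ m, ε / (2 * θ) < ∑ i ∈ Finset.Ico n m, α i := by
    obtain ⟨m, hm⟩ :=
      (tendsto_atTop.mp hdiv (∑ i ∈ Finset.range n, α i + ε / (2 * θ) + 1)).exists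
    refine ⟨max m n, ?_⟩
    have h1 : ∑ i ∈ Finset.range n, α i + ε / (2 * θ) + 1
        ≤ ∑ i ∈ Finset.range (max m n), α i :=
      le_trans hm (Finset.sum_le_sum_of_subset_of_nonneg
        (Finset.range_subset_range.mpr (le_max_left _ _)) (fun i _ _ => hα i))
    have h2 : ∑ i ∈ Finset.Ico n (max m n), α i
        = ∑ i ∈ Finset.range (max m n), α i - ∑ i ∈ Finset.range n, α i := by
      rw [Finset.sum_Ico_eq_sub _ (le_max_right _ _)]
    linarith
  classical
  set m := Nat.find hEx with hmdef
  have hm : ε / (2 * θ) < ∑ i ∈ Finset.Ico n m, α i := Nat.find_spec hEx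
  have hmin : ∀ k < m, ∑ i ∈ Finset.Ico n k, α i ≤ ε / (2 * θ) := fun k hk =>
    le_of_not_gt (Nat.find_min hEx hk)
  have htel : ∀ k, n ≤ k → β n - β k ≤ θ * ∑ i ∈ Finset.Ico n k, α i := by
    intro k hk
    induction k, hk using Nat.le_induction with
    | base => simp
    | succ k hk ih =>
      rw [Finset.sum_Ico_succ_top hk, mul_add]
      have := hreg k
      linarith
  have hβlow : ∀ k, n ≤ k → k < m → ε / 2 ≤ β k := by
    intro k hk hkm
    have h1 := htel k hk
    have h2 := hmin k hkm
    have h3 : θ * ∑ i ∈ Finset.Ico n k, α i ≤ θ * (ε / (2 * θ)) :=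
      mul_le_mul_of_nonneg_left h2 hθ.le
    have hθε : θ * (ε / (2 * θ)) = ε / 2 := by field_simp
    linarith
  have hnm : n < m := by
    by_contra h
    push_neg at h
    rw [Finset.Ico_eq_empty (not_lt.mpr h)] at hm
    simp at hm
    linarith
  have hlb : ε / 2 * ∑ i ∈ Finset.Ico n m, α i ≤ ∑ i ∈ Finset.Ico n m, α i * β i := by
    rw [Finset.mul_sum]
    refine Finset.sum_le_sum fun i hi => ?_
    rw [Finset.mem_Ico] at hi
    have h1 := hβlow i hi.1 hi.2
    have h2 := hα i
    nlinarith
  have hub := hN m (le_of_lt (lt_of_le_of_lt hn hnm)) n hn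
  rw [Real.dist_eq] at hub
  rw [Finset.sum_Ico_eq_sub _ hnm.le] at hlb hm
  rw [Finset.sum_Ico_eq_sub (fun i => α i * β i) hnm.le] at hlb
  have habs : ∑ i ∈ Finset.range m, α i * β i - ∑ i ∈ Finset.range n, α i * β i
      < ε ^ 2 / (4 * θ) := lt_of_le_of_lt (le_abs_self _) hub
  have hkey : ε / 2 * (ε / (2 * θ)) = ε ^ 2 / (4 * θ) := by field_simp; ring
  nlinarith
end

section
/- Suppose (αₙ) and (βₙ) are sequences of nonnegative reals with ∑αᵢ = ∞ and ∑αᵢβᵢ < ∞. Then βₙ → 0 if and only if there exists θ > 0 such that for every ε > 0 there exists N such that for all N ≤ n < m, βₙ − βₘ − θ·∑_{i=n}^{m−1} αᵢ ≤ ε. -/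
open Filter Finset Topology

/-! If `β n` is large, follow `β` from `n` until it first drops below a small level `c`, at
some `m > n`. On `[n, m)` we have `β ≥ c`, so `c ∑_{[n,m)} α ≤ ∑_{[n,m)} α β`, which is small
for large `n` because `∑ α β < ∞`; the hypothesis then bounds `β n` by
`β m + θ ∑_{[n,m)} α + c`, which is small. Such an `m` exists because `β` is frequently
below `c`: otherwise `α ≤ α β / c` eventually and `∑ α` would converge. -/

/-- The condition `limsup_N sup {β n - β m - θ ∑_{i=n}^{m-1} α i : N ≤ n < m} ≤ 0`. -/
def DecayRateLE (α β : ℕ → ℝ) (θ : ℝ) : Prop :=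
  ∀ ε : ℝ, 0 < ε → ∃ N : ℕ, ∀ n m : ℕ, N ≤ n → n < m →
    β n - β m - θ * ∑ i ∈ Finset.Ico n m, α i ≤ ε

lemma Nat.exists_first_after {p : ℕ → Prop} {n : ℕ} (hn : ¬p n) (h : ∃ m ≥ n + 1, p m) :
    ∃ m, n < m ∧ p m ∧ ∀ i ∈ Ico n m, ¬p i := by
  classical
  obtain ⟨hnm, hm⟩ := Nat.find_spec h
  refine ⟨Nat.find h, hnm, hm, fun i hi => ?_⟩
  obtain ⟨hni, him⟩ := mem_Ico.1 hi
  rcases hni.eq_or_lt with rfl | hni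
  · exact hn
  · exact fun hi => Nat.find_min h him ⟨hni, hi⟩

lemma Summable.eventually_forall_sum_Ico_lt {f : ℕ → ℝ} (hf : Summable f) {δ : ℝ}
    (hδ : 0 < δ) : ∀ᶠ n in atTop, ∀ m, n ≤ m → ∑ i ∈ Ico n m, f i < δ := by
  obtain ⟨N, hN⟩ := Metric.cauchySeq_iff.1 hf.hasSum.tendsto_sum_nat.cauchySeq δ hδ
  filter_upwards [eventually_ge_atTop N] with n hn m hm
  rw [sum_Ico_eq_sub _ hm]
  exact (le_abs_self _).trans_lt (hN m (hn.trans hm) n hn)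

lemma frequently_lt_of_summable_mul {α β : ℕ → ℝ} (hα : ∀ n, 0 ≤ α n) (hα_sum : ¬Summable α)
    (hsum : Summable (fun i => α i * β i)) {c : ℝ} (hc : 0 < c) : ∃ᶠ n in atTop, β n < c := by
  intro hle
  refine hα_sum ((hsum.div_const c).of_norm_bounded_eventually_nat ?_)
  filter_upwards [hle] with n hn
  rw [Real.norm_of_nonneg (hα n), le_div_iff₀ hc]
  exact mul_le_mul_of_nonneg_left (not_lt.1 hn) (hα n)

section

variable {α β : ℕ → ℝ}

lemma decayRateLE_of_tendsto_zero (hα : ∀ n, 0 ≤ α n) (hβ : ∀ n, 0 ≤ β n)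
    (h : Tendsto β atTop (𝓝 0)) {θ : ℝ} (hθ : 0 ≤ θ) : DecayRateLE α β θ := by
  intro ε hε
  obtain ⟨N, hN⟩ := eventually_atTop.1 (h.eventually (gt_mem_nhds hε))
  refine ⟨N, fun n m hn _ => ?_⟩
  have := mul_nonneg hθ (sum_nonneg fun i _ => hα i : 0 ≤ ∑ i ∈ Ico n m, α i)
  linarith [hN n hn, hβ m]

lemma tendsto_zero_of_decayRateLE (hα : ∀ n, 0 ≤ α n) (hβ : ∀ n, 0 ≤ β n)
    (hdiv : Tendsto (fun n => ∑ i ∈ range n, α i) atTop atTop)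
    (hsum : Summable (fun i => α i * β i)) {θ : ℝ} (hθ : 0 < θ) (h : DecayRateLE α β θ) :
    Tendsto β atTop (𝓝 0) := by
  refine tendsto_order.2 ⟨fun a ha => .of_forall fun n => ha.trans_le (hβ n), fun ε hε => ?_⟩
  obtain ⟨c, hc, rfl⟩ : ∃ c, 0 < c ∧ ε = 3 * c := ⟨ε / 3, by positivity, by ring⟩
  obtain ⟨N, hN⟩ := h c hc
  have hfreq := frequently_lt_of_summable_mul hα
    ((not_summable_iff_tendsto_nat_atTop_of_nonneg hα).2 hdiv) hsum hc
  filter_upwards [eventually_ge_atTop N,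
    hsum.eventually_forall_sum_Ico_lt (δ := c * c / θ) (by positivity)] with n hnN htail
  rcases lt_or_ge (β n) c with hsmall | hbig
  · linarith
  obtain ⟨m, hnm, hβm, hmin⟩ :=
    Nat.exists_first_after (p := fun i => β i < c) hbig.not_gt (hfreq.forall_exists_of_atTop _)
  have hmass : c * ∑ i ∈ Ico n m, α i ≤ ∑ i ∈ Ico n m, α i * β i := by
    rw [mul_sum]
    exact sum_le_sum fun i hi => by nlinarith [hα i, not_lt.1 (hmin i hi)]
  have hdrift : θ * ∑ i ∈ Ico n m, α i < c := by
    have := hmass.trans_lt (htail m hnm.le)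
    rw [lt_div_iff₀ hθ] at this
    exact lt_of_mul_lt_mul_left (by linarith) hc.le
  linarith [hN n m hnN hnm]

end

/-- Suppose (αₙ), (βₙ) are nonnegative real sequences with ∑αᵢ = ∞ and
∑αᵢβᵢ < ∞.  Then βₙ → 0 iff there is θ > 0 such that
limsup_N sup{βₙ − βₘ − θ∑_{i=n}^{m−1}αᵢ : N ≤ n < m} ≤ 0, formulated as:
for every ε > 0 there is N such that βₙ − βₘ − θ∑_{i=n}^{m−1}αᵢ ≤ ε
for all N ≤ n < m. -/
theorem stmt5 (α β : ℕ → ℝ)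
    (hα : ∀ n, 0 ≤ α n) (hβ : ∀ n, 0 ≤ β n)
    (hdiv : Tendsto (fun n => ∑ i ∈ Finset.range n, α i) atTop atTop)
    (hsum : Summable (fun i => α i * β i)) :
    Tendsto β atTop (nhds 0) ↔
      ∃ θ : ℝ, 0 < θ ∧ ∀ ε : ℝ, 0 < ε → ∃ N : ℕ, ∀ n m : ℕ, N ≤ n → n < m →
        β n - β m - θ * ∑ i ∈ Finset.Ico n m, α i ≤ ε :=
  ⟨fun h => ⟨1, one_pos, decayRateLE_of_tendsto_zero hα hβ h zero_le_one⟩,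
    fun ⟨_, hθ, h⟩ => tendsto_zero_of_decayRateLE hα hβ hdiv hsum hθ h⟩
end

section
/- (Quantitative lemma) Let (αₙ), (βₙ) be sequences of nonnegative reals and r : ℕ × ℚ₊ → ℕ a monotone (in the first argument) rate of divergence for ∑αᵢ = ∞, i.e. ∑_{i=n}^{r(n,x)} αᵢ ≥ x for all n, x. Fix ε > 0, g : ℕ → ℕ, θ > 0, N₁, N₂ ∈ ℕ, and set N := max{N₁,N₂}. If ∑_{i=N₁}^{r(N+g(N), ε/(4θ))} αᵢβᵢ ≤ ε²/(8θ), and βₙ − βₘ ≤ θ·∑_{i=n}^{m−1}αᵢ + ε/4 for all N₂ ≤ n < m ≤ r(N+g(N), ε/(4θ)), then βₙ ≤ ε for all n ∈ [N, N+g(N)]. -/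
open Filter Finset

/-- Quantitative lemma (Theorem: quantitative version of Proposition on βₙ → 0).
r is a monotone rate of divergence for ∑αᵢ = ∞.  With N := max N₁ N₂, if the
partial sum ∑_{i=N₁}^{r(N+g(N),ε/4θ)} αᵢβᵢ is ≤ ε²/(8θ) and
βₙ − βₘ ≤ θ∑_{i=n}^{m−1}αᵢ + ε/4 for all N₂ ≤ n < m ≤ r(N+g(N),ε/4θ),
then βₙ ≤ ε on [N, N+g(N)]. -/
theorem stmt6 (α β : ℕ → ℝ) (r : ℕ → ℝ → ℕ)
    (hα : ∀ n, 0 ≤ α n) (hβ : ∀ n, 0 ≤ β n)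
    (hr : ∀ (n : ℕ) (x : ℝ), 0 < x → x ≤ ∑ i ∈ Finset.Icc n (r n x), α i)
    (hrmono : ∀ (m n : ℕ) (x : ℝ), m ≤ n → r m x ≤ r n x)
    (ε θ : ℝ) (hε : 0 < ε) (hθ : 0 < θ)
    (g : ℕ → ℕ) (N₁ N₂ N : ℕ) (hN : N = max N₁ N₂)
    (hsum : ∑ i ∈ Finset.Icc N₁ (r (N + g N) (ε / (4 * θ))), α i * β i ≤ ε ^ 2 / (8 * θ))
    (hreg : ∀ n m : ℕ, N₂ ≤ n → n < m → m ≤ r (N + g N) (ε / (4 * θ)) →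
      β n - β m ≤ θ * ∑ i ∈ Finset.Ico n m, α i + ε / 4) :
    ∀ n : ℕ, N ≤ n → n ≤ N + g N → β n ≤ ε := by
  intro n hn1 hn2
  by_contra hcon
  push_neg at hcon
  set x := ε / (4 * θ) with hxdef
  have hx : 0 < x := by positivity
  set R := r (N + g N) x with hRdef
  have hM : x ≤ ∑ i ∈ Finset.Icc n (r n x), α i := hr n x hx
  have hex : ∃ k, x ≤ ∑ i ∈ Finset.Icc n k, α i := ⟨r n x, hM⟩
  classical
  set K := Nat.find hex with hKdef
  have hK : x ≤ ∑ i ∈ Finset.Icc n K, α i := Nat.find_spec hex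
  have hKmin : ∀ j, j < K → ∑ i ∈ Finset.Icc n j, α i < x := by
    intro j hj
    have := Nat.find_min hex hj
    push_neg at this
    exact this
  have hKM : K ≤ r n x := Nat.find_min' hex hM
  have hMR : r n x ≤ R := hrmono n (N + g N) x hn2
  have hKR : K ≤ R := hKM.trans hMR
  have hN₂n : N₂ ≤ n := le_trans (hN ▸ le_max_right N₁ N₂) hn1
  have hN₁n : N₁ ≤ n := le_trans (hN ▸ le_max_left N₁ N₂) hn1
  have hθx : θ * x = ε / 4 := by
    rw [hxdef]; field_simp
  have hβi : ∀ i ∈ Finset.Icc n K, β n - ε / 2 ≤ β i := by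
    intro i hi
    rw [Finset.mem_Icc] at hi
    rcases eq_or_lt_of_le hi.1 with heq | hlt
    · rw [← heq]; linarith
    · have hre := hreg n i hN₂n hlt (hi.2.trans hKR)
      have h1 : ∑ j ∈ Finset.Ico n i, α j < x := by
        have hi1 : i = (i - 1) + 1 := (Nat.succ_pred_eq_of_pos
          (Nat.lt_of_le_of_lt (Nat.zero_le n) hlt)).symm
        rw [hi1, Finset.Ico_add_one_right_eq_Icc]
        exact hKmin (i - 1) (by omega)
      have h2 : θ * ∑ j ∈ Finset.Ico n i, α j < ε / 4 := by
        calc θ * ∑ j ∈ Finset.Ico n i, α j < θ * x := by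
              exact mul_lt_mul_of_pos_left h1 hθ
          _ = ε / 4 := hθx
      linarith
  have hlow : (β n - ε / 2) * ∑ i ∈ Finset.Icc n K, α i
      ≤ ∑ i ∈ Finset.Icc n K, α i * β i := by
    rw [Finset.mul_sum]
    apply Finset.sum_le_sum
    intro i hi
    nlinarith [hα i, hβi i hi]
  have hsub : ∑ i ∈ Finset.Icc n K, α i * β i
      ≤ ∑ i ∈ Finset.Icc N₁ R, α i * β i :=
    Finset.sum_le_sum_of_subset_of_nonneg (Finset.Icc_subset_Icc hN₁n hKR)
      (fun i _ _ => mul_nonneg (hα i) (hβ i))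
  have hmid : ε / 2 * x < (β n - ε / 2) * ∑ i ∈ Finset.Icc n K, α i := by
    have h3 : ε / 2 < β n - ε / 2 := by linarith
    calc ε / 2 * x < (β n - ε / 2) * x := mul_lt_mul_of_pos_right h3 hx
      _ ≤ (β n - ε / 2) * ∑ i ∈ Finset.Icc n K, α i :=
          mul_le_mul_of_nonneg_left hK (by linarith)
  have hfin : ε / 2 * x = ε ^ 2 / (8 * θ) := by
    rw [hxdef]; field_simp; ring
  linarith
end

section
/- Let (αₙ), (βₙ) be nonnegative real sequences with a monotone rate of divergence r for ∑αᵢ = ∞, and suppose θ > 0 satisfies βₙ − β_{n+1} ≤ θαₙ for all n. If N ∈ ℕ, ε > 0 and g : ℕ → ℕ are such that ∑_{i=N}^{r(N+g(N), ε/(2θ))} αᵢβᵢ ≤ ε²/(4θ), then βₙ ≤ ε for all n ∈ [N, N+g(N)]. -/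
open Filter Finset

/-!
If some `β n` with `N ≤ n ≤ N + g N` exceeded `ε`, then, since `β` can drop by at most
`θ αᵢ` per step, it stays above `ε / 2` as long as the partial sums `∑_{j=n}^{i-1} αⱼ` stay
below `c = ε / (2θ)`. Stopping at the first `m` with `∑_{i=n}^{m} αᵢ ≥ c`, which lies before
`r (N + g N) c` by monotonicity of the rate, gives `∑_{i=n}^{m} αᵢ βᵢ > (ε / 2) c = ε² / (4θ)`.
-/

lemma sub_le_mul_sum_Ico_of_sub_succ_le {α β : ℕ → ℝ} {θ : ℝ}
    (hreg : ∀ n, β n - β (n + 1) ≤ θ * α n) {n i : ℕ} (hni : n ≤ i) :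
    β n - β i ≤ θ * ∑ j ∈ Ico n i, α j := by
  induction i, hni using Nat.le_induction with
  | base => simp
  | succ i hni ih =>
    rw [sum_Ico_succ_top hni, mul_add]
    linarith [hreg i]

lemma exists_first_Icc_sum_ge {M : Type*} [AddCommMonoid M] [LinearOrder M]
    {α : ℕ → M} {c : M} (hc : 0 < c) {n K : ℕ} (hK : c ≤ ∑ i ∈ Icc n K, α i) :
    ∃ m ≤ K, c ≤ ∑ i ∈ Icc n m, α i ∧ ∀ i ≤ m, ∑ j ∈ Ico n i, α j < c := by
  classical
  have hex : ∃ m, c ≤ ∑ i ∈ Icc n m, α i := ⟨K, hK⟩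
  refine ⟨Nat.find hex, Nat.find_min' hex hK, Nat.find_spec hex, fun i hi => ?_⟩
  rcases Nat.eq_zero_or_pos i with rfl | hi₀
  · simpa using hc
  · obtain ⟨j, rfl⟩ := Nat.exists_eq_add_one_of_ne_zero hi₀.ne'
    rw [Ico_add_one_right_eq_Icc]
    exact not_le.mp (Nat.find_min hex (by omega))

lemma mul_lt_sum_mul_of_lt {ι : Type*} {s : Finset ι} {α β : ι → ℝ} {b c : ℝ}
    (hα : ∀ i ∈ s, 0 ≤ α i) (hb : 0 ≤ b) (hc : 0 < c) (hαs : c ≤ ∑ i ∈ s, α i)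
    (hβ : ∀ i ∈ s, b < β i) :
    b * c < ∑ i ∈ s, α i * β i := by
  obtain ⟨i₀, hi₀, hαi₀⟩ : ∃ i ∈ s, 0 < α i := by
    by_contra! h
    have : ∑ i ∈ s, α i = 0 := sum_eq_zero fun i hi => le_antisymm (h i hi) (hα i hi)
    linarith
  calc b * c ≤ ∑ i ∈ s, α i * b := by
        rw [← sum_mul, mul_comm]; exact mul_le_mul_of_nonneg_right hαs hb
    _ < ∑ i ∈ s, α i * β i :=
        sum_lt_sum (fun i hi => mul_le_mul_of_nonneg_left (hβ i hi).le (hα i hi))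
          ⟨i₀, hi₀, mul_lt_mul_of_pos_left (hβ i₀ hi₀) hαi₀⟩

/-- Simplified quantitative lemma: if βₙ − β_{n+1} ≤ θαₙ for all n, r is a
monotone rate of divergence for ∑αᵢ = ∞, and
∑_{i=N}^{r(N+g(N),ε/2θ)} αᵢβᵢ ≤ ε²/(4θ), then βₙ ≤ ε on [N, N+g(N)]. -/
theorem stmt7 (α β : ℕ → ℝ) (r : ℕ → ℝ → ℕ)
    (hα : ∀ n, 0 ≤ α n) (hβ : ∀ n, 0 ≤ β n)
    (hr : ∀ (n : ℕ) (x : ℝ), 0 < x → x ≤ ∑ i ∈ Finset.Icc n (r n x), α i)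
    (hrmono : ∀ (m n : ℕ) (x : ℝ), m ≤ n → r m x ≤ r n x)
    (θ : ℝ) (hθ : 0 < θ)
    (hreg : ∀ n, β n - β (n + 1) ≤ θ * α n)
    (N : ℕ) (ε : ℝ) (hε : 0 < ε) (g : ℕ → ℕ)
    (hsum : ∑ i ∈ Finset.Icc N (r (N + g N) (ε / (2 * θ))), α i * β i ≤ ε ^ 2 / (4 * θ)) :
    ∀ n : ℕ, N ≤ n → n ≤ N + g N → β n ≤ ε := by
  intro n hNn hnN
  by_contra! hβn
  set c := ε / (2 * θ) with hc_def
  have hc : 0 < c := by positivity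
  obtain ⟨m, hmr, hm, hpref⟩ := exists_first_Icc_sum_ge hc (hr n c hc)
  have hβm : ∀ i ∈ Icc n m, ε / 2 < β i := by
    intro i hi
    have hi := mem_Icc.mp hi
    have hdrop := sub_le_mul_sum_Ico_of_sub_succ_le hreg hi.1
    have hθc : θ * ∑ j ∈ Ico n i, α j < θ * c := mul_lt_mul_of_pos_left (hpref i hi.2) hθ
    have : θ * c = ε / 2 := by rw [hc_def]; field_simp
    linarith
  have hwindow : ∑ i ∈ Icc n m, α i * β i ≤ ∑ i ∈ Icc N (r (N + g N) c), α i * β i :=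
    sum_le_sum_of_subset_of_nonneg (Icc_subset_Icc hNn (hmr.trans (hrmono n _ c hnN)))
      fun i _ _ => mul_nonneg (hα i) (hβ i)
  have hlow := mul_lt_sum_mul_of_lt (fun i _ => hα i) (by positivity) hc hm hβm
  have : ε ^ 2 / (4 * θ) = ε / 2 * c := by rw [hc_def]; field_simp; ring
  linarith
end

section
/- Suppose (αₙ), (βₙ) are nonnegative real sequences, r is a monotone rate of divergence for ∑αᵢ = ∞, θ > 0 satisfies βₙ − β_{n+1} ≤ θαₙ for all n, and φ : ℚ₊ → ℕ is a rate of convergence for the series ∑αᵢβᵢ (i.e. ∑_{i=n}^{n+m} αᵢβᵢ ≤ ε for all n ≥ φ(ε) and all m). Then ψ(ε) := φ(ε²/(4θ)) is a rate of convergence for βₙ → 0, i.e. βₙ ≤ ε for all n ≥ ψ(ε). -/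
open Filter Finset

/-- If βₙ − β_{n+1} ≤ θαₙ for all n, r is a monotone rate of divergence for
∑αᵢ = ∞, and φ is a rate of (Cauchy) convergence for ∑αᵢβᵢ < ∞, then
ψ(ε) := φ(ε²/(4θ)) is a rate of convergence for βₙ → 0. -/
theorem stmt8 (α β : ℕ → ℝ) (r : ℕ → ℝ → ℕ) (φ : ℝ → ℕ)
    (hα : ∀ n, 0 ≤ α n) (hβ : ∀ n, 0 ≤ β n)
    (hr : ∀ (n : ℕ) (x : ℝ), 0 < x → x ≤ ∑ i ∈ Finset.Icc n (r n x), α i)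
    (hrmono : ∀ (m n : ℕ) (x : ℝ), m ≤ n → r m x ≤ r n x)
    (θ : ℝ) (hθ : 0 < θ)
    (hreg : ∀ n, β n - β (n + 1) ≤ θ * α n)
    (hφ : ∀ ε : ℝ, 0 < ε → ∀ n, φ ε ≤ n → ∀ m : ℕ,
      ∑ i ∈ Finset.Icc n (n + m), α i * β i ≤ ε) :
    ∀ ε : ℝ, 0 < ε → ∀ n, φ (ε ^ 2 / (4 * θ)) ≤ n → β n ≤ ε := by
  classical
  intro ε hε n hn
  by_contra hcon
  push_neg at hcon
  set δ := ε ^ 2 / (4 * θ) with hδdef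
  have hδ : 0 < δ := by positivity
  set x := ε / (2 * θ) with hxdef
  have hx : 0 < x := by positivity
  have hθx : θ * x = ε / 2 := by
    rw [hxdef]; field_simp
  -- telescoping bound
  have hA : ∀ k, β n - β (n + k) ≤ θ * ∑ j ∈ Finset.range k, α (n + j) := by
    intro k
    induction k with
    | zero => simp
    | succ k ih =>
      have h1 := hreg (n + k)
      rw [Finset.sum_range_succ, mul_add]
      have e : n + (k + 1) = n + k + 1 := rfl
      rw [e]
      linarith
  -- existence of a block whose α-sum reaches x
  have hex : ∃ m, x ≤ ∑ i ∈ Finset.Icc n (n + m), α i := by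
    have hrn : n ≤ r n x := by
      by_contra h
      push_neg at h
      have h2 := hr n x hx
      rw [Finset.Icc_eq_empty (by omega)] at h2
      simp at h2
      linarith
    exact ⟨r n x - n, by rw [show n + (r n x - n) = r n x from by omega]; exact hr n x hx⟩
  set m₀ := Nat.find hex with hm₀def
  have hm₀spec : x ≤ ∑ i ∈ Finset.Icc n (n + m₀), α i := Nat.find_spec hex
  have hmin : ∀ m < m₀, ∑ i ∈ Finset.Icc n (n + m), α i < x := by
    intro m hm
    exact not_le.mp (Nat.find_min hex hm)
  -- β stays large on the block
  have hβlb : ∀ i ∈ Finset.Icc n (n + m₀), β n - ε / 2 ≤ β i := by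
    intro i hi
    rw [Finset.mem_Icc] at hi
    obtain ⟨h1, h2⟩ := hi
    have hk : i = n + (i - n) := by omega
    have hsum : ∑ j ∈ Finset.range (i - n), α (n + j) ≤ x := by
      rcases Nat.eq_zero_or_pos (i - n) with h | h
      · simp [h, le_of_lt hx]
      · have h3 : i - n - 1 < m₀ := by omega
        have h4 := hmin _ h3
        have he : ∑ j ∈ Finset.range (i - n), α (n + j)
            = ∑ i ∈ Finset.Icc n (n + (i - n - 1)), α i := by
          rw [← Finset.Ico_add_one_right_eq_Icc, Finset.sum_Ico_eq_sum_range,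
            show n + (i - n - 1) + 1 - n = i - n from by omega]
        rw [he]; linarith
    have hAk := hA (i - n)
    rw [← hk] at hAk
    have h5 : θ * ∑ j ∈ Finset.range (i - n), α (n + j) ≤ θ * x :=
      mul_le_mul_of_nonneg_left hsum hθ.le
    linarith
  -- lower bound on the weighted sum
  have hlow : (β n - ε / 2) * x ≤ ∑ i ∈ Finset.Icc n (n + m₀), α i * β i := by
    calc (β n - ε / 2) * x
        ≤ (β n - ε / 2) * ∑ i ∈ Finset.Icc n (n + m₀), α i :=
          mul_le_mul_of_nonneg_left hm₀spec (by linarith)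
      _ = ∑ i ∈ Finset.Icc n (n + m₀), (β n - ε / 2) * α i := by rw [Finset.mul_sum]
      _ ≤ ∑ i ∈ Finset.Icc n (n + m₀), α i * β i :=
          Finset.sum_le_sum (fun i hi => by
            rw [mul_comm]
            exact mul_le_mul_of_nonneg_left (hβlb i hi) (hα i))
  have hup := hφ δ hδ n hn m₀
  have hfinal : δ < (β n - ε / 2) * x := by
    have h6 : ε / 2 < β n - ε / 2 := by linarith
    calc δ = (ε / 2) * x := by rw [hδdef, hxdef]; ring
      _ < (β n - ε / 2) * x := mul_lt_mul_of_pos_right h6 hx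
  linarith
end

section
/- Let (aₙ) be any strictly decreasing computable sequence of positive rationals converging to 0. Define sₙ := aₘ for the least m ≤ n such that the m-th Turing machine Tₘ halts on input m in exactly n steps, and sₙ := 0 if no such m exists. Then sₙ → 0 but (sₙ) has no computable rate of convergence. -/
open Filter Finset

/-- `haltsInExactly m n` means: the `m`-th Turing machine (partial recursive
code) halts on input `m` in exactly `n` steps. -/
def haltsInExactly (m n : ℕ) : Prop :=
  (Nat.Partrec.Code.evaln (n + 1) (Denumerable.ofNat Nat.Partrec.Code m) m).isSome ∧
    ¬(Nat.Partrec.Code.evaln n (Denumerable.ofNat Nat.Partrec.Code m) m).isSome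

/-!
If `Tₘ` halts on `m` at time `n` then `sₙ ≥ aₘ`. Every machine halts at most once, so from
some time on only machines `m ≥ M` contribute, and `sₙ ≤ a_M`: hence `sₙ → 0`. A computable
rate `φ` would force every halting time of `Tₘ` on `m` to lie below `φ(aₘ₊₁)`, since
`sₙ ≥ aₘ > aₘ₊₁`; running `Tₘ` for `φ(aₘ₊₁)` steps would then decide the diagonal halting
problem.
-/

open Nat.Partrec Topology

namespace Nat.Partrec.Code

theorem evaln_isSome_mono {k₁ k₂ : ℕ} {c : Code} {n : ℕ} (hk : k₁ ≤ k₂)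
    (h : (evaln k₁ c n).isSome) : (evaln k₂ c n).isSome := by
  obtain ⟨x, hx⟩ := Option.isSome_iff_exists.1 h
  exact Option.isSome_iff_exists.2 ⟨x, evaln_mono hk hx⟩

theorem eval_dom_iff_exists_evaln_isSome {c : Code} {n : ℕ} :
    (eval c n).Dom ↔ ∃ k, (evaln k c n).isSome := by
  simp only [Part.dom_iff_mem, evaln_complete, Option.isSome_iff_exists]
  exact ⟨fun ⟨x, k, hk⟩ => ⟨k, x, hk⟩, fun ⟨k, x, hk⟩ => ⟨x, k, hk⟩⟩

theorem eval_comp_const (c : Code) (k x : ℕ) : (c.comp (Code.const k)).eval x = c.eval k := by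
  simp only [eval, eval_const]
  exact Part.bind_some _ _

/-- `c` halts on `0` iff `c.comp (const 0)` halts on its own code. -/
theorem not_computablePred_eval_ofNat_self_dom :
    ¬ComputablePred fun m : ℕ => (eval (Denumerable.ofNat Code m) m).Dom := fun h =>
  ComputablePred.halting_problem 0 <| ComputablePred.computable_of_manyOneReducible
    ⟨fun c => Encodable.encode (c.comp (Code.const 0)),
      (_root_.Primrec.encode.comp
        (primrec₂_comp.comp _root_.Primrec.id (_root_.Primrec.const _))).to_comp,
      fun c => by simp only [Denumerable.ofNat_encode, eval_comp_const]⟩ h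

theorem not_exists_computable_halting_bound :
    ¬∃ b : ℕ → ℕ, Computable b ∧ ∀ m, (eval (Denumerable.ofNat Code m) m).Dom →
      (evaln (b m) (Denumerable.ofNat Code m) m).isSome := by
  rintro ⟨b, hb, hbound⟩
  refine not_computablePred_eval_ofNat_self_dom (ComputablePred.computable_iff.2
    ⟨fun m => (evaln (b m) (Denumerable.ofNat Code m) m).isSome, ?_, ?_⟩)
  · exact _root_.Primrec.option_isSome.to_comp.comp <| primrec_evaln.to_comp.comp
      ((hb.pair (Computable.ofNat _)).pair Computable.id)
  · funext m
    exact propext ⟨hbound m, fun h => eval_dom_iff_exists_evaln_isSome.2 ⟨_, h⟩⟩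

end Nat.Partrec.Code

open Nat.Partrec.Code

theorem haltsInExactly.le {m n : ℕ} (h : haltsInExactly m n) : m ≤ n := by
  obtain ⟨x, hx⟩ := Option.isSome_iff_exists.1 h.1
  exact Nat.lt_succ_iff.1 (evaln_bound hx)

theorem haltsInExactly.evaln_isSome {m n k : ℕ} (h : haltsInExactly m n) (hk : n < k) :
    (evaln k (Denumerable.ofNat Code m) m).isSome :=
  evaln_isSome_mono hk h.1

theorem haltsInExactly.unique {m n n' : ℕ} (h : haltsInExactly m n)
    (h' : haltsInExactly m n') : n = n' := by
  by_contra hne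
  rcases Nat.lt_or_gt_of_ne hne with hlt | hlt
  · exact h'.2 (h.evaln_isSome hlt)
  · exact h.2 (h'.evaln_isSome hlt)

theorem exists_haltsInExactly_of_eval_dom {m : ℕ}
    (h : (eval (Denumerable.ofNat Code m) m).Dom) : ∃ n, haltsInExactly m n := by
  classical
  have hex := eval_dom_iff_exists_evaln_isSome.1 h
  obtain ⟨n, hn⟩ : ∃ n, Nat.find hex = n + 1 :=
    Nat.exists_eq_add_one.2 <| Nat.pos_of_ne_zero fun h0 => by
      simpa [h0, evaln] using Nat.find_spec hex
  exact ⟨n, hn ▸ Nat.find_spec hex, Nat.find_min hex (by omega)⟩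

theorem eventually_forall_lt_not_haltsInExactly (M : ℕ) :
    ∀ᶠ n in atTop, ∀ m < M, ¬haltsInExactly m n := by
  have hfin : {n | ∃ m < M, haltsInExactly m n}.Finite := by
    have hunion : {n | ∃ m < M, haltsInExactly m n} =
        ⋃ m ∈ Set.Iio M, {n | haltsInExactly m n} := by
      ext; simp
    rw [hunion]
    exact (Set.finite_Iio M).biUnion fun m _ =>
      Set.Subsingleton.finite fun _ h _ h' => haltsInExactly.unique h h'
  simpa [← Nat.cofinite_eq_atTop] using hfin.eventually_cofinite_notMem

section HaltingValues

variable {a s : ℕ → ℚ}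
  (hs₁ : ∀ n m : ℕ, m ≤ n → haltsInExactly m n → (∀ k < m, ¬haltsInExactly k n) → s n = a m)
include hs₁

theorem eq_zero_or_exists_haltsInExactly
    (hs₂ : ∀ n : ℕ, (∀ m ≤ n, ¬haltsInExactly m n) → s n = 0) (n : ℕ) :
    s n = 0 ∨ ∃ m, haltsInExactly m n ∧ s n = a m := by
  classical
  by_cases hex : ∃ m, haltsInExactly m n
  · have hm := Nat.find_spec hex
    exact Or.inr ⟨_, hm, hs₁ n _ hm.le hm fun k hk => Nat.find_min hex hk⟩
  · exact Or.inl (hs₂ n fun m _ hm => hex ⟨m, hm⟩)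

theorem le_of_haltsInExactly (hanti : Antitone a) {m n : ℕ} (h : haltsInExactly m n) :
    a m ≤ s n := by
  classical
  have hex : ∃ m, haltsInExactly m n := ⟨m, h⟩
  have hm := Nat.find_spec hex
  rw [hs₁ n _ hm.le hm fun k hk => Nat.find_min hex hk]
  exact hanti (Nat.find_min' hex h)

theorem lt_rate_of_haltsInExactly (hanti : StrictAnti a) (hpos : ∀ n, 0 < a n) {φ : ℚ → ℕ}
    (hφ : ∀ ε : ℚ, 0 < ε → ∀ n, φ ε ≤ n → s n ≤ ε) {m n : ℕ} (h : haltsInExactly m n) :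
    n < φ (a (m + 1)) := by
  by_contra! hn
  exact lt_irrefl _ <| calc
    a (m + 1) < a m := hanti m.lt_succ_self
    _ ≤ s n := le_of_haltsInExactly hs₁ hanti.antitone h
    _ ≤ a (m + 1) := hφ _ (hpos _) n hn

end HaltingValues

theorem tendsto_zero_of_eq_zero_or_haltsInExactly {a s : ℕ → ℚ} (ha₀ : ∀ n, 0 ≤ a n)
    (hlim : Tendsto (fun n => (a n : ℝ)) atTop (𝓝 0))
    (hs : ∀ n, s n = 0 ∨ ∃ m, haltsInExactly m n ∧ s n = a m) :
    Tendsto (fun n => (s n : ℝ)) atTop (𝓝 0) := by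
  have hs₀ : ∀ n, (0 : ℝ) ≤ s n := fun n => by
    rcases hs n with h | ⟨m, -, h⟩ <;> simp [h, ha₀]
  refine tendsto_order.2 ⟨fun ε hε => .of_forall fun n => hε.trans_le (hs₀ n), fun ε hε => ?_⟩
  obtain ⟨M, hM⟩ := eventually_atTop.1 ((tendsto_order.1 hlim).2 ε hε)
  filter_upwards [eventually_forall_lt_not_haltsInExactly M] with n hn
  rcases hs n with h | ⟨m, hm, h⟩
  · simpa [h] using hε
  · rw [h]
    exact hM m (not_lt.1 fun hlt => hn m hlt hm)

/-- Let (aₙ) be a strictly decreasing computable sequence of positive rationals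
converging to 0, and define sₙ := aₘ for the least m ≤ n such that Tₘ halts on
input m in exactly n steps (sₙ := 0 if no such m exists).  Then sₙ → 0, but
(sₙ) has no computable rate of convergence. -/
theorem stmt10 (a : ℕ → ℚ) (ha : Computable a)
    (hpos : ∀ n, 0 < a n) (hdec : ∀ n, a (n + 1) < a n)
    (hlim : Tendsto (fun n => (a n : ℝ)) atTop (nhds 0))
    (s : ℕ → ℚ)
    (hs₁ : ∀ n m : ℕ, m ≤ n → haltsInExactly m n →
      (∀ k < m, ¬haltsInExactly k n) → s n = a m)
    (hs₂ : ∀ n : ℕ, (∀ m ≤ n, ¬haltsInExactly m n) → s n = 0) :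
    Tendsto (fun n => (s n : ℝ)) atTop (nhds 0) ∧
      ¬∃ φ : ℚ → ℕ, Computable φ ∧
        ∀ ε : ℚ, 0 < ε → ∀ n, φ ε ≤ n → s n ≤ ε := by
  refine ⟨tendsto_zero_of_eq_zero_or_haltsInExactly (fun n => (hpos n).le) hlim
    (eq_zero_or_exists_haltsInExactly hs₁ hs₂), ?_⟩
  rintro ⟨φ, hφ, hrate⟩
  refine not_exists_computable_halting_bound
    ⟨fun m => φ (a (m + 1)), hφ.comp (ha.comp Computable.succ), fun m hm => ?_⟩
  obtain ⟨n, hn⟩ := exists_haltsInExactly_of_eval_dom hm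
  exact hn.evaln_isSome
    (lt_rate_of_haltsInExactly hs₁ (strictAnti_nat_of_succ_lt hdec) hpos hrate hn)
end

section
/- Suppose (μₙ), (αₙ), (βₙ), (γₙ) are nonnegative real sequences with αₙ > 0, satisfying μ_{n+1} ≤ μₙ − αₙβₙ + γₙ, ∑αᵢ = ∞, (αₙ) bounded and γₙ/αₙ → 0. If there exists ω : ℚ₊ → ℚ₊ such that for all ε > 0 and all n, βₙ ≤ ω(ε) implies μₙ ≤ ε, then μₙ → 0. -/
open Filter Finset

/-!
Fix `ε` and let `δ = ω ε`. Once `γₙ ≤ c αₙ` with `c` small, each step with `βₙ > δ` lowers `μ`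
by at least `(δ/2) αₙ`; since `∑ αₙ = ∞` and `μ ≥ 0`, the steps with `βₙ ≤ δ` recur infinitely
often. At such a step `μₙ ≤ ε` and `μₙ₊₁ ≤ ε + c αₙ`, while the other steps never increase `μ`,
so from the first such step on `μ` stays below `ε + c · sup α`.
-/

/-- Adding `κ` times the partial sums of `a` to `u` gives a sequence that is eventually
antitone, which cannot happen along a divergent series while `u ≥ 0`. -/
theorem frequently_of_descent_of_sum_tendsto_atTop {u a : ℕ → ℝ} {P : ℕ → Prop} {κ : ℝ}
    (hu : ∀ n, 0 ≤ u n) (hκ : 0 < κ)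
    (ha : Tendsto (fun n => ∑ i ∈ range n, a i) atTop atTop)
    (hstep : ∀ᶠ n in atTop, ¬ P n → u (n + 1) ≤ u n - κ * a n) :
    ∃ᶠ n in atTop, P n := by
  intro hnot
  obtain ⟨M, hM⟩ := eventually_atTop.1 (hstep.and hnot)
  set v : ℕ → ℝ := fun n => u n + κ * ∑ i ∈ range n, a i
  have hv : ∀ n, M ≤ n → v n ≤ v M := by
    intro n hn
    induction n, hn using Nat.le_induction with
    | base => exact le_rfl
    | succ n hn ih =>
      have h := (hM n hn).1 (hM n hn).2
      simp only [v, sum_range_succ] at ih ⊢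
      linarith
  obtain ⟨n, hn, hnM⟩ :=
    ((ha.const_mul_atTop hκ).eventually_gt_atTop (v M)).and (eventually_ge_atTop M) |>.exists
  have := hv n hnM
  linarith [hu n]

theorem eventually_le_of_frequently_le_of_le_max {u : ℕ → ℝ} {B : ℝ}
    (hfreq : ∃ᶠ n in atTop, u n ≤ B) (hstep : ∀ᶠ n in atTop, u (n + 1) ≤ max (u n) B) :
    ∀ᶠ n in atTop, u n ≤ B := by
  obtain ⟨N, hN⟩ := eventually_atTop.1 hstep
  obtain ⟨n₀, hn₀N, hn₀⟩ := frequently_atTop.1 hfreq N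
  refine eventually_atTop.2 ⟨n₀, fun n hn => ?_⟩
  induction n, hn using Nat.le_induction with
  | base => exact hn₀
  | succ n hn ih => exact (hN n (hn₀N.trans hn)).trans (max_le ih le_rfl)

section Descent

variable {μ α β γ : ℕ → ℝ} {A : ℝ}

theorem eventually_le_add_of_modulus
    (hμ : ∀ n, 0 ≤ μ n) (hα : ∀ n, 0 < α n) (hβ : ∀ n, 0 ≤ β n)
    (hrec : ∀ n, μ (n + 1) ≤ μ n - α n * β n + γ n)
    (hdiv : Tendsto (fun n => ∑ i ∈ range n, α i) atTop atTop)
    (hbd : ∀ n, α n ≤ A) (hquot : Tendsto (fun n => γ n / α n) atTop (nhds 0))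
    {δ q η : ℝ} (hδ : 0 < δ) (hη : 0 < η) (hq : ∀ n, β n ≤ δ → μ n ≤ q) :
    ∀ᶠ n in atTop, μ n ≤ q + η := by
  have hA : 0 < A := (hα 0).trans_le (hbd 0)
  set c := min (δ / 2) (η / A)
  have hc : 0 < c := lt_min (half_pos hδ) (div_pos hη hA)
  have hcα : ∀ n, c * α n ≤ η := fun n =>
    calc c * α n ≤ η / A * A := mul_le_mul (min_le_right _ _) (hbd n) (hα n).le (by positivity)
      _ = η := div_mul_cancel₀ η hA.ne'
  have hrec' : ∀ᶠ n in atTop, μ (n + 1) ≤ μ n - α n * (β n - c) :=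
    (hquot.eventually (gt_mem_nhds hc)).mono fun n hn => by
      have := (div_lt_iff₀ (hα n)).1 hn
      linarith [hrec n]
  have hdescent : ∀ᶠ n in atTop, ¬ β n ≤ δ → μ (n + 1) ≤ μ n - δ / 2 * α n :=
    hrec'.mono fun n hn hβn => by
      have : δ / 2 ≤ β n - c := by linarith [min_le_left (δ / 2) (η / A)]
      nlinarith [hα n]
  have hfreq : ∃ᶠ n in atTop, β n ≤ δ :=
    frequently_of_descent_of_sum_tendsto_atTop hμ (half_pos hδ) hdiv hdescent
  refine eventually_le_of_frequently_le_of_le_max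
    (hfreq.mono fun n hn => (hq n hn).trans (by linarith)) ?_
  filter_upwards [hrec', hdescent] with n hn hn'
  by_cases hβn : β n ≤ δ
  · have : μ (n + 1) ≤ μ n + c * α n := by nlinarith [hα n, hβ n]
    exact le_max_of_le_right (by linarith [hq n hβn, hcα n])
  · exact le_max_of_le_left (by nlinarith [hα n, hn' hβn])

end Descent

theorem stmt12_general (μ α β γ : ℕ → ℝ) (A : ℝ)
    (hμ : ∀ n, 0 ≤ μ n) (hα : ∀ n, 0 < α n) (hβ : ∀ n, 0 ≤ β n)
    (hrec : ∀ n, μ (n + 1) ≤ μ n - α n * β n + γ n)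
    (hdiv : Tendsto (fun n => ∑ i ∈ Finset.range n, α i) atTop atTop)
    (hbd : ∀ n, α n ≤ A)
    (hquot : Tendsto (fun n => γ n / α n) atTop (nhds 0))
    (ω : ℚ → ℚ) (hωpos : ∀ ε : ℚ, 0 < ε → 0 < ω ε)
    (hω : ∀ ε : ℚ, 0 < ε → ∀ n, β n ≤ (ω ε : ℝ) → μ n ≤ (ε : ℝ)) :
    Tendsto μ atTop (nhds 0) := by
  refine tendsto_order.2 ⟨fun a ha => Eventually.of_forall fun n => ha.trans_le (hμ n),
    fun a ha => ?_⟩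
  obtain ⟨q, hq0, hqa⟩ := exists_rat_btwn (half_pos ha)
  have hq0' : (0 : ℚ) < q := by exact_mod_cast hq0
  have hδ : (0 : ℝ) < ω q := by exact_mod_cast hωpos q hq0'
  filter_upwards [eventually_le_add_of_modulus hμ hα hβ hrec hdiv hbd hquot hδ hq0
    (hω q hq0')] with n hn
  linarith

/-- If (μₙ), (αₙ), (βₙ), (γₙ) are nonnegative real sequences with αₙ > 0,
μ_{n+1} ≤ μₙ − αₙβₙ + γₙ, ∑αᵢ = ∞, (αₙ) bounded, γₙ/αₙ → 0, and there is a
modulus ω : ℚ₊ → ℚ₊ with βₙ ≤ ω(ε) ⟹ μₙ ≤ ε, then μₙ → 0. -/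
theorem stmt12 (μ α β γ : ℕ → ℝ) (A : ℝ)
    (hμ : ∀ n, 0 ≤ μ n) (hα : ∀ n, 0 < α n) (hβ : ∀ n, 0 ≤ β n) (hγ : ∀ n, 0 ≤ γ n)
    (hrec : ∀ n, μ (n + 1) ≤ μ n - α n * β n + γ n)
    (hdiv : Tendsto (fun n => ∑ i ∈ Finset.range n, α i) atTop atTop)
    (hbd : ∀ n, α n ≤ A)
    (hquot : Tendsto (fun n => γ n / α n) atTop (nhds 0))
    (ω : ℚ → ℚ) (hωpos : ∀ ε : ℚ, 0 < ε → 0 < ω ε)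
    (hω : ∀ ε : ℚ, 0 < ε → ∀ n, β n ≤ (ω ε : ℝ) → μ n ≤ (ε : ℝ)) :
    Tendsto μ atTop (nhds 0) :=
  stmt12_general μ α β γ A hμ hα hβ hrec hdiv hbd hquot ω hωpos hω
end

section
/- Suppose (μₙ), (αₙ), (βₙ), (γₙ) are nonnegative real sequences with αₙ > 0, satisfying μ_{n+1} ≤ μₙ − αₙβₙ + γₙ, ∑αᵢ = ∞, (αₙ) bounded, γₙ/αₙ → 0, and μₙ > 0 implies βₙ > 0 for all n. If μₙ → 0, then there exists ω : ℚ₊ → ℚ₊ such that for all ε > 0 and all n, βₙ ≤ ω(ε) implies μₙ ≤ ε. -/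
open Filter Finset

/-- Converse direction: under the same recursive inequality and conditions,
with μₙ > 0 ⟹ βₙ > 0, if μₙ → 0 then there exists a modulus ω : ℚ₊ → ℚ₊ such
that βₙ ≤ ω(ε) implies μₙ ≤ ε for all ε > 0 and all n. -/
theorem stmt13 (μ α β γ : ℕ → ℝ) (A : ℝ)
    (hμ : ∀ n, 0 ≤ μ n) (hα : ∀ n, 0 < α n) (hβ : ∀ n, 0 ≤ β n) (hγ : ∀ n, 0 ≤ γ n)
    (hrec : ∀ n, μ (n + 1) ≤ μ n - α n * β n + γ n)
    (hdiv : Tendsto (fun n => ∑ i ∈ Finset.range n, α i) atTop atTop)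
    (hbd : ∀ n, α n ≤ A)
    (hquot : Tendsto (fun n => γ n / α n) atTop (nhds 0))
    (hpos : ∀ n, 0 < μ n → 0 < β n)
    (hlim : Tendsto μ atTop (nhds 0)) :
    ∃ ω : ℚ → ℚ, ∀ ε : ℚ, 0 < ε →
      0 < ω ε ∧ ∀ n, β n ≤ (ω ε : ℝ) → μ n ≤ (ε : ℝ) := by
  have H : ∀ ε : ℚ, ∃ q : ℚ, 0 < ε →
      (0 < q ∧ ∀ n, β n ≤ (q : ℝ) → μ n ≤ (ε : ℝ)) := by
    intro ε
    by_cases hε : 0 < ε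
    · have hεR : (0 : ℝ) < (ε : ℝ) := by exact_mod_cast hε
      obtain ⟨N, hN⟩ := (Metric.tendsto_atTop.mp hlim (ε : ℝ) hεR)
      have hN' : ∀ n ≥ N, μ n ≤ (ε : ℝ) := by
        intro n hn
        have := hN n hn
        rw [Real.dist_eq, sub_zero, abs_of_nonneg (hμ n)] at this
        linarith
      set T := (Finset.range N).filter (fun n => (ε : ℝ) < μ n) with hT
      by_cases hTe : T.Nonempty
      · have hm : 0 < T.inf' hTe β := by
          rw [Finset.lt_inf'_iff]
          intro n hn
          have := (Finset.mem_filter.mp hn).2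
          exact hpos n (lt_trans hεR this)
        obtain ⟨q, hq0, hqm⟩ := exists_rat_btwn hm
        refine ⟨q, fun _ => ⟨by exact_mod_cast hq0, fun n hn => ?_⟩⟩
        by_contra hcon
        push_neg at hcon
        have hnN : n < N := by
          by_contra h
          push_neg at h
          exact absurd (hN' n h) (not_le.mpr hcon)
        have hnT : n ∈ T := Finset.mem_filter.mpr ⟨Finset.mem_range.mpr hnN, hcon⟩
        have := Finset.inf'_le β hnT
        linarith
      · refine ⟨1, fun _ => ⟨one_pos, fun n _ => ?_⟩⟩
        by_contra hcon
        push_neg at hcon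
        rcases lt_or_ge n N with h | h
        · exact hTe ⟨n, Finset.mem_filter.mpr ⟨Finset.mem_range.mpr h, hcon⟩⟩
        · exact absurd (hN' n h) (not_le.mpr hcon)
    · exact ⟨1, fun h => absurd h hε⟩
  choose ω hω using H
  exact ⟨ω, hω⟩
end

section
/- (Rate of metastability, Case II) Let (μₙ), (αₙ), (βₙ), (γₙ) be nonnegative real sequences with αₙ > 0, satisfying μ_{n+1} ≤ μₙ − αₙβₙ + γₙ, with μₙ ≤ c, αₙ ≤ α for all n, and r a monotone rate of divergence for ∑αᵢ = ∞. Fix ε > 0 and g : ℕ → ℕ, and define h(δ,m) := g̃(r(m, 2c/δ)) where g̃(i) := max{j + g(j) : j ≤ i}. If p ∈ ℕ and δ > 0 are such that there exists m ≤ p with γₙ/αₙ ≤ min{δ/2, ε/(2α)} for all n ∈ [m, h(δ,m)], and βₙ ≤ δ implies μₙ ≤ ε/2 for all n ≤ h(δ,p), then there exists N ≤ r(p, 2c/δ) such that μₙ ≤ ε for all n ∈ [N, N+g(N)]. -/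
open Filter Finset

/-- Rate of metastability, Case II.  With c bounding (μₙ), A bounding (αₙ),
r a monotone rate of divergence for ∑αᵢ = ∞, g̃(i) := max{j+g(j) : j ≤ i} and
h(δ,m) := g̃(r(m,2c/δ)): if m ≤ p is such that γₙ/αₙ ≤ min{δ/2, ε/(2A)} on
[m,h(δ,m)] and βₙ ≤ δ ⟹ μₙ ≤ ε/2 for n ≤ h(δ,p), then there is
N ≤ r(p,2c/δ) with μₙ ≤ ε on [N,N+g(N)]. -/
theorem stmt14 (μ α β γ : ℕ → ℝ) (c A : ℝ)
    (hμ0 : ∀ n, 0 ≤ μ n) (hα : ∀ n, 0 < α n) (hβ : ∀ n, 0 ≤ β n) (hγ : ∀ n, 0 ≤ γ n)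
    (hrec : ∀ n, μ (n + 1) ≤ μ n - α n * β n + γ n)
    (hc : ∀ n, μ n ≤ c) (hA : ∀ n, α n ≤ A) (hApos : 0 < A)
    (r : ℕ → ℝ → ℕ)
    (hr : ∀ (n : ℕ) (x : ℝ), 0 < x → x ≤ ∑ i ∈ Finset.Icc n (r n x), α i)
    (hrmono : ∀ (m n : ℕ) (x : ℝ), m ≤ n → r m x ≤ r n x)
    (ε : ℝ) (hε : 0 < ε) (g : ℕ → ℕ)
    (gt : ℕ → ℕ) (hgt : ∀ i, gt i = (Finset.range (i + 1)).sup (fun j => j + g j))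
    (h : ℝ → ℕ → ℕ) (hh : ∀ δ m, h δ m = gt (r m (2 * c / δ)))
    (p m : ℕ) (δ : ℝ) (hδ : 0 < δ) (hmp : m ≤ p)
    (hγα : ∀ n, m ≤ n → n ≤ h δ m → γ n / α n ≤ min (δ / 2) (ε / (2 * A)))
    (hmod : ∀ n, n ≤ h δ p → β n ≤ δ → μ n ≤ ε / 2) :
    ∃ N ≤ r p (2 * c / δ), ∀ n, N ≤ n → n ≤ N + g N → μ n ≤ ε := by
  -- c ≥ 0
  have hc0 : 0 ≤ c := le_trans (hμ0 0) (hc 0)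
  rcases eq_or_lt_of_le hc0 with hczero | hcpos
  · -- c = 0 : μ is identically ≤ 0 ≤ ε
    exact ⟨0, Nat.zero_le _, fun n _ _ => le_trans (hc n) (by linarith)⟩
  set X : ℝ := 2 * c / δ with hXdef
  have hX : 0 < X := by positivity
  set R : ℕ := r m X with hRdef
  -- m ≤ R
  have hmR : m ≤ R := by
    by_contra hcon
    push_neg at hcon
    have h1 := hr m X hX
    rw [Finset.Icc_eq_empty (by omega)] at h1
    simp at h1
    linarith
  -- gt is monotone and gt i ≥ i + g i
  have hgtge : ∀ i, i + g i ≤ gt i := by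
    intro i
    rw [hgt]
    exact Finset.le_sup (f := fun j => j + g j) (Finset.self_mem_range_succ i)
  have hgtmono : ∀ a b, a ≤ b → gt a ≤ gt b := by
    intro a b hab
    rw [hgt, hgt]
    exact Finset.sup_mono (Finset.range_subset_range.mpr (by omega))
  have hRh : R ≤ h δ m := by
    rw [hh]
    exact le_trans (by omega : R ≤ R + g R) (hgtge R)
  have hhmp : h δ m ≤ h δ p := by
    rw [hh, hh]
    exact hgtmono _ _ (hrmono m p _ hmp)
  -- the γ bounds on [m, h δ m]
  have hγ1 : ∀ n, m ≤ n → n ≤ h δ m → γ n ≤ α n * (δ / 2) := by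
    intro n h1 h2
    have := le_trans (hγα n h1 h2) (min_le_left _ _)
    rw [div_le_iff₀ (hα n)] at this
    linarith [this]
  have hγ2 : ∀ n, m ≤ n → n ≤ h δ m → γ n ≤ ε / 2 := by
    intro n h1 h2
    have h0 := le_trans (hγα n h1 h2) (min_le_right _ _)
    rw [div_le_iff₀ (hα n)] at h0
    have hpos : 0 ≤ ε / (2 * A) := by positivity
    have h4 : ε / (2 * A) * α n ≤ ε / (2 * A) * A :=
      mul_le_mul_of_nonneg_left (hA n) hpos
    have h5 : ε / (2 * A) * A = ε / 2 := by
      rw [div_mul_eq_mul_div, mul_comm 2 A, mul_comm ε A,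
        mul_div_mul_left _ _ (ne_of_gt hApos)]
    linarith
  -- existence of N in [m, R] with β N ≤ δ
  have hex : ∃ N, m ≤ N ∧ N ≤ R ∧ β N ≤ δ := by
    by_contra hcon
    push_neg at hcon
    -- descent: μ (m+k) ≤ μ m - (δ/2) * ∑_{i ∈ [m, m+k)} α i, for m + k ≤ R
    have key : ∀ k, m + k ≤ R →
        μ (m + k) ≤ μ m - (δ / 2) * ∑ i ∈ Finset.Ico m (m + k), α i := by
      intro k
      induction k with
      | zero => intro _; simp
      | succ k ih =>
        intro hk
        have hk' : m + k ≤ R := by omega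
        have ihk := ih hk'
        have hn : m + k = m + k := rfl
        set n := m + k with hndef
        have hβn : δ < β n := hcon n (by omega) hk'
        have hγn : γ n ≤ α n * (δ / 2) := hγ1 n (by omega) (le_trans hk' hRh)
        have hstep := hrec n
        have hαβ : α n * δ ≤ α n * β n :=
          mul_le_mul_of_nonneg_left (le_of_lt hβn) (le_of_lt (hα n))
        have hμstep : μ (n + 1) ≤ μ n - (δ / 2) * α n := by nlinarith
        have hmk1 : m + (k + 1) = n + 1 := by omega
        rw [hmk1, show n + 1 = (m + k) + 1 from rfl,
          Finset.sum_Ico_succ_top (by omega : m ≤ m + k)]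
        linarith
    -- final strict step at R
    have hkey := key (R - m) (by omega)
    have hRm : m + (R - m) = R := by omega
    rw [hRm] at hkey
    have hβR : δ < β R := hcon R hmR le_rfl
    have hγR : γ R ≤ α R * (δ / 2) := hγ1 R hmR hRh
    have hstepR := hrec R
    have hαβR : α R * δ ≤ α R * β R :=
      mul_le_mul_of_nonneg_left (le_of_lt hβR) (le_of_lt (hα R))
    have hfin : μ (R + 1) < μ R - (δ / 2) * α R := by nlinarith [hα R]
    have hsum : X ≤ ∑ i ∈ Finset.Icc m R, α i := hr m X hX
    rw [← Finset.Ico_add_one_right_eq_Icc,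
      Finset.sum_Ico_succ_top (by omega : m ≤ R)] at hsum
    have hXc : (δ / 2) * X = c := by
      rw [hXdef]
      field_simp
    have := hμ0 (R + 1)
    have hcm := hc m
    nlinarith
  obtain ⟨N, hmN, hNR, hβN⟩ := hex
  have hNrp : N ≤ r p X := le_trans hNR (hrmono m p X hmp)
  refine ⟨N, hNrp, ?_⟩
  -- N + g N ≤ h δ m
  have hNgh : N + g N ≤ h δ m := by
    rw [hh]
    calc N + g N ≤ gt N := hgtge N
    _ ≤ gt R := hgtmono _ _ hNR
  have hNh : N ≤ h δ p := le_trans (le_trans hNR hRh) hhmp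
  have hμN : μ N ≤ ε / 2 := hmod N hNh hβN
  -- induction along [N, N + g N]
  have main : ∀ j, j ≤ g N → μ (N + j) ≤ ε := by
    intro j
    induction j with
    | zero => intro _; simpa using le_trans hμN (by linarith)
    | succ j ih =>
      intro hj
      have ihj : μ (N + j) ≤ ε := ih (by omega)
      set n := N + j with hn
      have hmn : m ≤ n := by omega
      have hnh : n ≤ h δ m := by omega
      have hγn2 : γ n ≤ ε / 2 := hγ2 n hmn hnh
      have hstep := hrec n
      have hmk : N + (j + 1) = n + 1 := by omega
      rw [hmk]
      by_cases hb : β n ≤ δ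
      · have hμn : μ n ≤ ε / 2 := hmod n (le_trans hnh hhmp) hb
        have hαβ : 0 ≤ α n * β n := mul_nonneg (le_of_lt (hα n)) (hβ n)
        linarith
      · push_neg at hb
        have hγn : γ n ≤ α n * (δ / 2) := hγ1 n hmn hnh
        have hαβ : α n * δ ≤ α n * β n :=
          mul_le_mul_of_nonneg_left (le_of_lt hb) (le_of_lt (hα n))
        nlinarith [hα n]
  intro n hNn hng
  have : n = N + (n - N) := by omega
  rw [this]
  exact main (n - N) (by omega)
end

section
/- (Rate of convergence, Case II) Let (μₙ), (αₙ), (βₙ), (γₙ) be nonnegative real sequences with αₙ > 0, satisfying μ_{n+1} ≤ μₙ − αₙβₙ + γₙ, with μₙ ≤ c and αₙ ≤ α for all n, r a monotone rate of divergence for ∑αᵢ = ∞, and φ a rate of convergence for γₙ/αₙ → 0. If ω : (0,∞) → (0,∞) satisfies: for all ε > 0 and n, βₙ ≤ ω(ε) implies μₙ ≤ ε, then μₙ → 0 with rate of convergence Φ(ε) := r(φ(min{ω(ε/2)/2, ε/(2α)}), 2c/ω(ε/2)), i.e. μₙ ≤ ε for all n ≥ Φ(ε). -/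
open Filter Finset

/-- Rate of convergence, Case II.  With c bounding (μₙ), A bounding (αₙ),
r a monotone rate of divergence for ∑αᵢ = ∞, φ a rate of convergence for
γₙ/αₙ → 0, and ω a modulus with βₙ ≤ ω(ε) ⟹ μₙ ≤ ε, we have μₙ ≤ ε for all
n ≥ Φ(ε) := r(φ(min{ω(ε/2)/2, ε/(2A)}), 2c/ω(ε/2)). -/
theorem stmt15 (μ α β γ : ℕ → ℝ) (c A : ℝ)
    (hμ0 : ∀ n, 0 ≤ μ n) (hα : ∀ n, 0 < α n) (hβ : ∀ n, 0 ≤ β n) (hγ : ∀ n, 0 ≤ γ n)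
    (hrec : ∀ n, μ (n + 1) ≤ μ n - α n * β n + γ n)
    (hc : ∀ n, μ n ≤ c) (hA : ∀ n, α n ≤ A) (hApos : 0 < A)
    (r : ℕ → ℝ → ℕ)
    (hr : ∀ (n : ℕ) (x : ℝ), 0 < x → x ≤ ∑ i ∈ Finset.Icc n (r n x), α i)
    (hrmono : ∀ (m n : ℕ) (x : ℝ), m ≤ n → r m x ≤ r n x)
    (φ : ℝ → ℕ)
    (hφ : ∀ ε : ℝ, 0 < ε → ∀ n, φ ε ≤ n → γ n / α n ≤ ε)
    (ω : ℝ → ℝ) (hωpos : ∀ ε : ℝ, 0 < ε → 0 < ω ε)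
    (hω : ∀ ε : ℝ, 0 < ε → ∀ n, β n ≤ ω ε → μ n ≤ ε) :
    ∀ ε : ℝ, 0 < ε → ∀ n,
      r (φ (min (ω (ε / 2) / 2) (ε / (2 * A)))) (2 * c / ω (ε / 2)) ≤ n →
      μ n ≤ ε := by
  intro ε hε n hn
  have hε2 : 0 < ε / 2 := by linarith
  set δ := ω (ε / 2) with hδdef
  have hδ : 0 < δ := hωpos _ hε2
  set x := min (δ / 2) (ε / (2 * A)) with hxdef
  set N := φ x with hNdef
  set M := r N (2 * c / δ) with hMdef
  have hc0 : 0 ≤ c := le_trans (hμ0 0) (hc 0)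
  rcases hc0.eq_or_lt with h0 | hcpos
  · exact le_trans (hc n) (by linarith)
  have hxpos : 0 < x := lt_min (by linarith) (by positivity)
  have hγα : ∀ m, N ≤ m → γ m ≤ α m * x := by
    intro m hm
    have h := hφ x hxpos m hm
    rw [div_le_iff₀ (hα m)] at h
    linarith
  have hNM : N ≤ M := by
    by_contra h
    push_neg at h
    have h1 := hr N (2 * c / δ) (by positivity)
    rw [Finset.Icc_eq_empty_of_lt h, Finset.sum_empty] at h1
    have h2 : (0:ℝ) < 2 * c / δ := by positivity
    linarith
  have htel : ∀ k, μ (N + k + 1) ≤ μ N - ∑ i ∈ Finset.Icc N (N + k), (α i * β i - γ i) := by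
    intro k
    induction k with
    | zero =>
      simp only [Nat.add_zero, Finset.Icc_self, Finset.sum_singleton]
      linarith [hrec N]
    | succ k ih =>
      rw [show N + (k + 1) = (N + k) + 1 by ring, Finset.sum_Icc_succ_top (by omega)]
      have h2 := hrec (N + k + 1)
      linarith
  have hex : ∃ m, N ≤ m ∧ m ≤ M ∧ β m ≤ δ := by
    by_contra h
    push_neg at h
    have hsum : (δ / 2) * ∑ i ∈ Finset.Icc N M, α i
        < ∑ i ∈ Finset.Icc N M, (α i * β i - γ i) := by
      rw [Finset.mul_sum]
      apply Finset.sum_lt_sum_of_nonempty (Finset.nonempty_Icc.mpr hNM)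
      intro i hi
      simp only [Finset.mem_Icc] at hi
      have hb := h i hi.1 hi.2
      have hg := hγα i hi.1
      have h1 : α i * δ < α i * β i := mul_lt_mul_of_pos_left hb (hα i)
      have h2 : α i * x ≤ α i * (δ / 2) :=
        mul_le_mul_of_nonneg_left (min_le_left _ _) (hα i).le
      linarith
    have hsa : 2 * c / δ ≤ ∑ i ∈ Finset.Icc N M, α i := hr N _ (by positivity)
    obtain ⟨k, hk⟩ := Nat.exists_eq_add_of_le hNM
    have ht := htel k
    rw [← hk] at ht
    have h3 : (δ / 2) * (2 * c / δ) ≤ (δ / 2) * ∑ i ∈ Finset.Icc N M, α i :=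
      mul_le_mul_of_nonneg_left hsa (by linarith)
    have hcd : (δ / 2) * (2 * c / δ) = c := by field_simp
    have h4 := hμ0 (M + 1)
    have h5 := hc N
    linarith
  obtain ⟨n₀, hn₀N, hn₀M, hβn₀⟩ := hex
  have key : ∀ k, μ (n₀ + k) ≤ ε := by
    intro k
    induction k with
    | zero =>
      have h := hω (ε / 2) hε2 n₀ hβn₀
      simpa using h.trans (by linarith)
    | succ k ih =>
      have hNk : N ≤ n₀ + k := le_trans hn₀N (Nat.le_add_right _ _)
      have hg := hγα (n₀ + k) hNk
      have hrec' := hrec (n₀ + k)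
      show μ (n₀ + k + 1) ≤ ε
      by_cases hb : β (n₀ + k) ≤ δ
      · have hμk : μ (n₀ + k) ≤ ε / 2 := hω (ε / 2) hε2 _ hb
        have h2 : α (n₀ + k) * x ≤ α (n₀ + k) * (ε / (2 * A)) :=
          mul_le_mul_of_nonneg_left (min_le_right _ _) (hα _).le
        have h3 : α (n₀ + k) * (ε / (2 * A)) ≤ A * (ε / (2 * A)) :=
          mul_le_mul_of_nonneg_right (hA _) (by positivity)
        have h4 : A * (ε / (2 * A)) = ε / 2 := by field_simp
        have h5 : 0 ≤ α (n₀ + k) * β (n₀ + k) := mul_nonneg (hα _).le (hβ _)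
        linarith
      · push_neg at hb
        have h1 : α (n₀ + k) * δ < α (n₀ + k) * β (n₀ + k) :=
          mul_lt_mul_of_pos_left hb (hα _)
        have h2 : α (n₀ + k) * x ≤ α (n₀ + k) * (δ / 2) :=
          mul_le_mul_of_nonneg_left (min_le_left _ _) (hα _).le
        have h6 : 0 ≤ α (n₀ + k) * δ := mul_nonneg (hα _).le hδ.le
        linarith
  have hn₀n : n₀ ≤ n := le_trans hn₀M hn
  obtain ⟨k, rfl⟩ := Nat.exists_eq_add_of_le hn₀n
  exact key k
end

section
/- (Rate of convergence, second variant) Let (μₙ), (αₙ), (βₙ), (γₙ) be nonnegative real sequences with αₙ > 0, satisfying μ_{n+1} ≤ μₙ − αₙβₙ + γₙ, with μₙ ≤ c and αₙ ≤ α for all n, r a monotone rate of divergence for ∑αᵢ = ∞, and φ a rate of convergence for γₙ/αₙ → 0. If ω : (0,∞) → (0,∞) satisfies: for all ε > 0 and n, βₙ ≤ ω(ε) implies μ_{n+1} ≤ ε, then μₙ ≤ ε for all n ≥ Φ(ε) := r(φ(ω(ε)/2), 2c/ω(ε)) + 1. -/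
open Filter Finset

/-- Rate of convergence, second variant.  With a modulus ω such that
βₙ ≤ ω(ε) ⟹ μ_{n+1} ≤ ε, we get μₙ ≤ ε for all
n ≥ Φ(ε) := r(φ(ω(ε)/2), 2c/ω(ε)) + 1. -/
theorem stmt17 (μ α β γ : ℕ → ℝ) (c A : ℝ)
    (hμ0 : ∀ n, 0 ≤ μ n) (hα : ∀ n, 0 < α n) (hβ : ∀ n, 0 ≤ β n) (hγ : ∀ n, 0 ≤ γ n)
    (hrec : ∀ n, μ (n + 1) ≤ μ n - α n * β n + γ n)
    (hc : ∀ n, μ n ≤ c) (hA : ∀ n, α n ≤ A) (hApos : 0 < A)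
    (r : ℕ → ℝ → ℕ)
    (hr : ∀ (n : ℕ) (x : ℝ), 0 < x → x ≤ ∑ i ∈ Finset.Icc n (r n x), α i)
    (hrmono : ∀ (m n : ℕ) (x : ℝ), m ≤ n → r m x ≤ r n x)
    (φ : ℝ → ℕ)
    (hφ : ∀ ε : ℝ, 0 < ε → ∀ n, φ ε ≤ n → γ n / α n ≤ ε)
    (ω : ℝ → ℝ) (hωpos : ∀ ε : ℝ, 0 < ε → 0 < ω ε)
    (hω : ∀ ε : ℝ, 0 < ε → ∀ n, β n ≤ ω ε → μ (n + 1) ≤ ε) :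
    ∀ ε : ℝ, 0 < ε → ∀ n, r (φ (ω ε / 2)) (2 * c / ω ε) + 1 ≤ n → μ n ≤ ε := by
  intro ε hε n hn
  set δ := ω ε with hδdef
  have hδ : 0 < δ := hωpos ε hε
  set N := φ (δ / 2) with hNdef
  set R := r N (2 * c / δ) with hRdef
  -- γ bound for k ≥ N
  have hγb : ∀ k, N ≤ k → γ k ≤ α k * (δ / 2) := by
    intro k hk
    have := hφ (δ / 2) (by positivity) k hk
    have hαk := hα k
    calc γ k = γ k / α k * α k := by field_simp
    _ ≤ (δ / 2) * α k := by
        apply mul_le_mul_of_nonneg_right this hαk.le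
    _ = α k * (δ / 2) := by ring
  -- step lemma: μ ≤ ε is preserved from N onwards
  have step : ∀ k, N ≤ k → μ k ≤ ε → μ (k + 1) ≤ ε := by
    intro k hk hμk
    by_cases hb : β k ≤ δ
    · exact hω ε hε k hb
    · push_neg at hb
      have h1 := hrec k
      have h2 : γ k ≤ α k * β k := by
        calc γ k ≤ α k * (δ / 2) := hγb k hk
        _ ≤ α k * β k := by
            apply mul_le_mul_of_nonneg_left _ (hα k).le
            linarith
      linarith
  by_cases hc0 : c ≤ 0
  · exact le_trans (hc n) (le_trans hc0 hε.le)
  push_neg at hc0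
  -- main claim: there is m ∈ [N, R] with μ (m+1) ≤ ε
  have claim : ∃ m, N ≤ m ∧ m ≤ R ∧ μ (m + 1) ≤ ε := by
    have hx : 0 < 2 * c / δ := by positivity
    have hsum := hr N (2 * c / δ) hx
    have hNR : N ≤ R := by
      by_contra hNR
      push_neg at hNR
      rw [Finset.Icc_eq_empty (by omega)] at hsum
      simp at hsum
      linarith
    by_cases hb : ∃ m, N ≤ m ∧ m ≤ R ∧ β m ≤ δ
    · obtain ⟨m, h1, h2, h3⟩ := hb
      exact ⟨m, h1, h2, hω ε hε m h3⟩
    · push_neg at hb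
      -- all β > δ on [N, R]; telescope
      have tel : ∀ j, N ≤ j → j ≤ R →
          μ (j + 1) ≤ μ N - (δ / 2) * ∑ i ∈ Finset.Icc N j, α i := by
        intro j hj
        induction j, hj using Nat.le_induction with
        | base =>
          intro hNR'
          have hbN := hb N le_rfl hNR'
          have h1 := hrec N
          have h2 := hγb N le_rfl
          simp only [Finset.Icc_self, Finset.sum_singleton]
          nlinarith [mul_le_mul_of_nonneg_left hbN.le (hα N).le]
        | succ j hj ih =>
          intro hjR
          have hjR' : j ≤ R := by omega
          have ihj := ih hjR'
          have hbj := hb (j + 1) (by omega) hjR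
          have h1 := hrec (j + 1)
          have h2 := hγb (j + 1) (by omega)
          rw [Finset.sum_Icc_succ_top (by omega : N ≤ j + 1)]
          have : μ (j + 1 + 1) ≤ μ (j + 1) - α (j+1) * (δ/2) := by
            nlinarith [mul_le_mul_of_nonneg_left hbj.le (hα (j+1)).le]
          calc μ (j + 1 + 1) ≤ μ (j + 1) - α (j+1) * (δ/2) := this
          _ ≤ μ N - (δ / 2) * ∑ i ∈ Finset.Icc N j, α i - α (j+1) * (δ/2) := by linarith
          _ = μ N - δ / 2 * (∑ i ∈ Finset.Icc N j, α i + α (j + 1)) := by ring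
      have hfin := tel R hNR le_rfl
      refine ⟨R, hNR, le_rfl, ?_⟩
      have h4 : (δ / 2) * (2 * c / δ) ≤ (δ / 2) * ∑ i ∈ Finset.Icc N R, α i :=
        mul_le_mul_of_nonneg_left hsum (by positivity)
      have h5 : (δ / 2) * (2 * c / δ) = c := by field_simp
      have := hc N
      linarith
  obtain ⟨m, hm1, hm2, hm3⟩ := claim
  -- propagate from m+1 to n
  have prop : ∀ k, m + 1 ≤ k → μ k ≤ ε := by
    intro k hk
    induction k, hk using Nat.le_induction with
    | base => exact hm3
    | succ k hk ih => exact step k (by omega) ih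
  exact prop n (by omega)
end

section
/- (Metastability of bounded series) Let (bₙ) be a sequence of nonnegative reals with ∑bᵢ ≤ b. Then for every ε > 0 and g : ℕ → ℕ, there exists n ≤ Φ(ε,g) := g̃^(⌈b/ε⌉)(0), where g̃(n) := n + g(n) + 1, such that ∑_{j=n}^{n+g(n)} bⱼ ≤ ε. -/
/-!
Iterating `g̃` from `0` cuts `ℕ` into consecutive blocks `[x k, x k + g (x k)]`, where
`x k = g̃^[k] 0`. The first `⌈b / ε⌉ + 1` blocks tile an initial segment, whose sum is at most `b`.
If each of these blocks had sum greater than `ε`, that sum would exceed `(⌈b / ε⌉ + 1) ε ≥ b`.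
-/

open Finset

section Blocks

variable {M : Type*} [AddCommMonoid M] (f : ℕ → M) {x : ℕ → ℕ}

theorem Finset.sum_Ico_eq_sum_sum_Ico_of_monotone (hx : Monotone x) (m : ℕ) :
    ∑ j ∈ Ico (x 0) (x m), f j = ∑ k ∈ range m, ∑ j ∈ Ico (x k) (x (k + 1)), f j := by
  induction m with
  | zero => simp
  | succ m ih =>
    rw [sum_range_succ, ← ih,
      sum_Ico_consecutive f (hx (Nat.zero_le m)) (hx (Nat.le_succ m))]

theorem exists_sum_Ico_le_of_sum_Ico_le [LinearOrder M] [IsOrderedCancelAddMonoid M]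
    (hx : Monotone x) {b ε : M} {N : ℕ} (hb : ∑ j ∈ Ico (x 0) (x (N + 1)), f j ≤ b)
    (hN : b ≤ (N + 1) • ε) :
    ∃ k ≤ N, ∑ j ∈ Ico (x k) (x (k + 1)), f j ≤ ε := by
  have hsum : ∑ k ∈ range (N + 1), ∑ j ∈ Ico (x k) (x (k + 1)), f j
      ≤ ∑ _k ∈ range (N + 1), ε := by
    rw [← sum_Ico_eq_sum_sum_Ico_of_monotone f hx, sum_const, card_range]
    exact hb.trans hN
  obtain ⟨k, hk, hle⟩ := exists_le_of_sum_le (nonempty_range_iff.mpr N.succ_ne_zero) hsum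
  exact ⟨k, Nat.lt_succ_iff.mp (mem_range.mp hk), hle⟩

end Blocks

theorem le_ceil_div_add_one_mul {b ε : ℝ} (hε : 0 < ε) : b ≤ (⌈b / ε⌉₊ + 1) * ε := by
  rw [← div_le_iff₀ hε]
  exact (Nat.le_ceil _).trans (by linarith)

theorem stmt18_general (b' : ℕ → ℝ) (b : ℝ)
    (hb : ∀ n : ℕ, ∑ i ∈ Finset.range n, b' i ≤ b)
    (ε : ℝ) (hε : 0 < ε) (g : ℕ → ℕ) :
    ∃ n ≤ (fun k => k + g k + 1)^[⌈b / ε⌉₊] 0,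
      ∑ j ∈ Finset.Icc n (n + g n), b' j ≤ ε := by
  set G : ℕ → ℕ := fun k => k + g k + 1
  set x : ℕ → ℕ := fun k => G^[k] 0
  have hx : Monotone x := fun m n hmn =>
    Function.monotone_iterate_of_id_le (fun k => by simp only [id, G]; omega) hmn 0
  have hblock (k : ℕ) : Ico (x k) (x (k + 1)) = Icc (x k) (x k + g (x k)) := by
    simp only [x, Function.iterate_succ_apply']
    exact Ico_add_one_right_eq_Icc _ _
  obtain ⟨k, hkN, hk⟩ := exists_sum_Ico_le_of_sum_Ico_le b' hx (N := ⌈b / ε⌉₊)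
    (by simpa only [x, Function.iterate_zero_apply, range_eq_Ico] using hb _)
    (by simpa only [nsmul_eq_mul, Nat.cast_add, Nat.cast_one] using le_ceil_div_add_one_mul hε)
  exact ⟨x k, hx hkN, hblock k ▸ hk⟩

/-- Metastability of bounded series: if (bₙ) is nonnegative with all partial
sums ≤ b, then for every ε > 0 and g : ℕ → ℕ there is
n ≤ g̃^(⌈b/ε⌉)(0), where g̃(k) := k + g(k) + 1, with ∑_{j=n}^{n+g(n)} bⱼ ≤ ε. -/
theorem stmt18 (b' : ℕ → ℝ) (b : ℝ)
    (hb' : ∀ n, 0 ≤ b' n)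
    (hb : ∀ n : ℕ, ∑ i ∈ Finset.range n, b' i ≤ b)
    (ε : ℝ) (hε : 0 < ε) (g : ℕ → ℕ) :
    ∃ n ≤ (fun k => k + g k + 1)^[⌈b / ε⌉₊] 0,
      ∑ j ∈ Finset.Icc n (n + g n), b' j ≤ ε :=
  stmt18_general b' b hb ε hε g
end

section
/- (Abstract gradient descent convergence) Let X be a real inner product space, Y ⊆ X, f : X → ℝ, (αₙ) nonnegative reals with ∑αᵢ = ∞, and (bₙ), (cₙ), (dₙ) nonnegative reals with ∑αᵢbᵢ < ∞, ∑cᵢ² < ∞, ∑dᵢ < ∞. Let x* ∈ Y, (xₙ) ⊆ Y, (uₙ) ⊆ X, and a, p, θ > 0 satisfy for all n: (i) f(x*) ≤ f(xₙ); (ii) f(xₙ) − f(y) ≤ ⟨uₙ, xₙ − y⟩ + bₙ for all y ∈ Y; (iii) ‖x_{n+1} − xₙ‖ ≤ cₙ; (iv) ⟨αₙuₙ, xₙ − x*⟩ ≤ a⟨xₙ − x_{n+1}, xₙ − x*⟩ + dₙ; (v) ‖uₙ‖ ≤ p; (vi) p·cₙ + bₙ ≤ θαₙ. Then f(xₙ)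 → f(x*). -/
/-!
Put `e n = f (x n) - f x⋆ ≥ 0`. Condition (ii) at `y = x⋆` together with (iv), (iii) and the
identity `2⟪x - x', x - x⋆⟫ = ‖x - x'‖² + ‖x - x⋆‖² - ‖x' - x⋆‖²` gives
`αₙ eₙ ≤ (a/2)(‖xₙ - x⋆‖² - ‖xₙ₊₁ - x⋆‖²) + (a/2) cₙ² + dₙ + αₙ bₙ`, which telescopes to
`∑ αₙ eₙ < ∞`. Condition (ii) at `y = xₙ₊₁` with (iii), (v), (vi) gives `eₙ ≤ eₙ₊₁ + θ αₙ`, so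
`e` decays at rate at most `θ` per unit of `α`-mass: after `xₘ`, `e` stays above `eₘ / 2`
until an `α`-mass of `eₘ / (2θ)` has passed, and that stretch alone contributes `eₘ² / (4θ)` to
the tail `∑_{n ≥ m} αₙ eₙ`. Since `∑ α = ∞` the stretch is finite, and since the tails tend to
`0`, so does `e`.
-/

open Filter Finset

theorem two_mul_real_inner_sub_sub {F : Type*} [NormedAddCommGroup F] [InnerProductSpace ℝ F]
    (x y z : F) :
    2 * inner ℝ (x - y) (x - z) = ‖x - y‖ ^ 2 + ‖x - z‖ ^ 2 - ‖y - z‖ ^ 2 := by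
  have h := norm_sub_sq_real (x - z) (x - y)
  rw [sub_sub_sub_cancel_left, real_inner_comm] at h
  linarith

theorem summable_of_le_sub_succ_add {g V w : ℕ → ℝ} (hg : ∀ n, 0 ≤ g n) (hV : ∀ n, 0 ≤ V n)
    (hw : Summable w) (h : ∀ n, g n ≤ V n - V (n + 1) + w n) : Summable g := by
  obtain ⟨B, hB⟩ := hw.tendsto_sum_tsum_nat.bddAbove_range
  refine summable_of_sum_range_le hg (c := V 0 + B) fun n => ?_
  calc ∑ i ∈ range n, g i ≤ ∑ i ∈ range n, (V i - V (i + 1) + w i) :=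
        sum_le_sum fun i _ => h i
    _ = V 0 - V n + ∑ i ∈ range n, w i := by rw [sum_add_distrib, sum_range_sub']
    _ ≤ V 0 + B := by linarith [hV n, hB ⟨n, rfl⟩]

theorem tendsto_sum_range_add_left_atTop {α : ℕ → ℝ}
    (hdiv : Tendsto (fun n => ∑ i ∈ range n, α i) atTop atTop) (m : ℕ) :
    Tendsto (fun k => ∑ j ∈ range k, α (m + j)) atTop atTop := by
  have hshift : Tendsto (fun k => ∑ i ∈ range (k + m), α i) atTop atTop :=
    (tendsto_add_atTop_iff_nat m).2 hdiv
  refine (tendsto_atTop_add_const_right _ (-∑ i ∈ range m, α i) hshift).congr fun k => ?_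
  rw [add_comm k m, sum_range_add]
  ring

section AlmostDecreasing

variable {e α : ℕ → ℝ} {θ : ℝ}

theorem le_add_mul_sum_of_le_add (hstep : ∀ n, e n ≤ e (n + 1) + θ * α n) (m k : ℕ) :
    e m ≤ e (m + k) + θ * ∑ j ∈ range k, α (m + j) := by
  induction k with
  | zero => simp
  | succ k ih =>
    rw [sum_range_succ, ← add_assoc]
    linarith [hstep (m + k)]

theorem sq_le_mul_tsum_of_le_add (hθ : 0 < θ) (hα : ∀ n, 0 ≤ α n) (he : ∀ n, 0 ≤ e n)
    (hdiv : Tendsto (fun n => ∑ i ∈ range n, α i) atTop atTop)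
    (hsum : Summable fun n => α n * e n) (hstep : ∀ n, e n ≤ e (n + 1) + θ * α n) (m : ℕ) :
    e m ^ 2 ≤ 4 * θ * ∑' k, α (k + m) * e (k + m) := by
  set T : ℕ → ℝ := fun k => ∑ j ∈ range k, α (m + j)
  have hex : ∃ K, e m / (2 * θ) < T K :=
    ((tendsto_sum_range_add_left_atTop hdiv m).eventually_gt_atTop _).exists
  set K := Nat.find hex
  have hK : e m / (2 * θ) < T K := Nat.find_spec hex
  have hhalf : ∀ k < K, e m / 2 ≤ e (m + k) := fun k hk => by
    have hTk : θ * T k ≤ θ * (e m / (2 * θ)) :=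
      mul_le_mul_of_nonneg_left (not_lt.1 (Nat.find_min hex hk)) hθ.le
    have hθT : θ * (e m / (2 * θ)) = e m / 2 := by field_simp
    linarith [le_add_mul_sum_of_le_add hstep m k]
  have hstretch : e m / 2 * T K ≤ ∑ k ∈ range K, α (k + m) * e (k + m) := by
    rw [mul_sum]
    refine sum_le_sum fun k hk => ?_
    rw [add_comm k m, mul_comm]
    exact mul_le_mul_of_nonneg_left (hhalf k (mem_range.1 hk)) (hα _)
  have htail : ∑ k ∈ range K, α (k + m) * e (k + m) ≤ ∑' k, α (k + m) * e (k + m) :=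
    ((summable_nat_add_iff m).2 hsum).sum_le_tsum _ fun k _ => mul_nonneg (hα _) (he _)
  calc e m ^ 2 = 4 * θ * (e m / 2 * (e m / (2 * θ))) := by field_simp; ring
    _ ≤ 4 * θ * (e m / 2 * T K) := by
      gcongr
      linarith [he m]
    _ ≤ 4 * θ * ∑' k, α (k + m) * e (k + m) :=
      mul_le_mul_of_nonneg_left (hstretch.trans htail) (by positivity)

theorem tendsto_zero_of_summable_mul_of_le_add (hθ : 0 < θ) (hα : ∀ n, 0 ≤ α n)
    (he : ∀ n, 0 ≤ e n) (hdiv : Tendsto (fun n => ∑ i ∈ range n, α i) atTop atTop)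
    (hsum : Summable fun n => α n * e n) (hstep : ∀ n, e n ≤ e (n + 1) + θ * α n) :
    Tendsto e atTop (nhds 0) := by
  have hsq : Tendsto (fun m => e m ^ 2) atTop (nhds 0) :=
    squeeze_zero (fun m => sq_nonneg _) (sq_le_mul_tsum_of_le_add hθ hα he hdiv hsum hstep)
      (by simpa using (tendsto_sum_nat_add fun n => α n * e n).const_mul (4 * θ))
  simpa [Real.sqrt_sq (he _)] using hsq.sqrt

end AlmostDecreasing

theorem mul_le_of_descent_step {X : Type*} [NormedAddCommGroup X] [InnerProductSpace ℝ X]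
    {x x' xstar u : X} {α e a b c d : ℝ} (ha : 0 ≤ a) (hα : 0 ≤ α)
    (hgrad : e ≤ inner ℝ u (x - xstar) + b) (hdesc1 : ‖x' - x‖ ≤ c)
    (hdesc2 : inner ℝ (α • u) (x - xstar) ≤ a * inner ℝ (x - x') (x - xstar) + d) :
    α * e ≤ a / 2 * ‖x - xstar‖ ^ 2 - a / 2 * ‖x' - xstar‖ ^ 2 + (a / 2 * c ^ 2 + d + α * b) := by
  have hsq : ‖x - x'‖ ^ 2 ≤ c ^ 2 := by
    rw [norm_sub_rev]
    exact pow_le_pow_left₀ (norm_nonneg _) hdesc1 2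
  have hpol := two_mul_real_inner_sub_sub x x' xstar
  rw [real_inner_smul_left] at hdesc2
  nlinarith [mul_le_mul_of_nonneg_left hgrad hα, mul_le_mul_of_nonneg_left hsq ha]

theorem stmt19_general {X : Type*} [NormedAddCommGroup X] [InnerProductSpace ℝ X]
    (Y : Set X) (f : X → ℝ)
    (α b c d : ℕ → ℝ)
    (hα : ∀ n, 0 ≤ α n)
    (hdiv : Tendsto (fun n => ∑ i ∈ Finset.range n, α i) atTop atTop)
    (hab : Summable (fun i => α i * b i))
    (hc2 : Summable (fun i => c i ^ 2))
    (hdsum : Summable d)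
    (xstar : X) (hxstar : xstar ∈ Y)
    (x : ℕ → X) (hx : ∀ n, x n ∈ Y) (u : ℕ → X)
    (a p θ : ℝ) (ha : 0 < a) (hθ : 0 < θ)
    (hmin : ∀ n, f xstar ≤ f (x n))
    (hgrad : ∀ n, ∀ y ∈ Y, f (x n) - f y ≤ inner ℝ (u n) (x n - y) + b n)
    (hdesc1 : ∀ n, ‖x (n + 1) - x n‖ ≤ c n)
    (hdesc2 : ∀ n, inner ℝ (α n • u n) (x n - xstar) ≤
      a * inner ℝ (x n - x (n + 1)) (x n - xstar) + d n)
    (hubd : ∀ n, ‖u n‖ ≤ p)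
    (hcoef : ∀ n, p * c n + b n ≤ θ * α n) :
    Tendsto (fun n => f (x n)) atTop (nhds (f xstar)) := by
  set e : ℕ → ℝ := fun n => f (x n) - f xstar
  have he : ∀ n, 0 ≤ e n := fun n => sub_nonneg.2 (hmin n)
  have hsum : Summable fun n => α n * e n :=
    summable_of_le_sub_succ_add (V := fun n => a / 2 * ‖x n - xstar‖ ^ 2)
      (fun n => mul_nonneg (hα n) (he n)) (fun n => by positivity)
      (((hc2.mul_left (a / 2)).add hdsum).add hab)
      fun n => mul_le_of_descent_step ha.le (hα n) (hgrad n xstar hxstar) (hdesc1 n) (hdesc2 n)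
  have hstep : ∀ n, e n ≤ e (n + 1) + θ * α n := fun n => by
    have hcs : inner ℝ (u n) (x n - x (n + 1)) ≤ p * c n :=
      calc inner ℝ (u n) (x n - x (n + 1)) ≤ ‖u n‖ * ‖x n - x (n + 1)‖ := real_inner_le_norm _ _
        _ ≤ p * c n := by
          rw [norm_sub_rev]
          exact mul_le_mul (hubd n) (hdesc1 n) (norm_nonneg _) ((norm_nonneg _).trans (hubd n))
    linarith [hgrad n _ (hx (n + 1)), hcoef n]
  simpa [e] using (tendsto_zero_of_summable_mul_of_le_add hθ hα he hdiv hsum hstep).add_const (f xstar)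

/-- Abstract gradient descent convergence: in a real inner product space X with
Y ⊆ X, f : X → ℝ, step sizes (αₙ) with ∑αᵢ = ∞, error terms (bₙ), (cₙ), (dₙ)
with ∑αᵢbᵢ < ∞, ∑cᵢ² < ∞, ∑dᵢ < ∞, a point x* ∈ Y acting as a minimizer,
(xₙ) ⊆ Y, approximate gradients (uₙ) and constants a, p, θ > 0 satisfying
conditions (i)–(vi), we have f(xₙ) → f(x*). -/
theorem stmt19 {X : Type*} [NormedAddCommGroup X] [InnerProductSpace ℝ X]
    (Y : Set X) (f : X → ℝ)
    (α b c d : ℕ → ℝ)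
    (hα : ∀ n, 0 ≤ α n) (hb : ∀ n, 0 ≤ b n) (hc : ∀ n, 0 ≤ c n) (hd : ∀ n, 0 ≤ d n)
    (hdiv : Tendsto (fun n => ∑ i ∈ Finset.range n, α i) atTop atTop)
    (hab : Summable (fun i => α i * b i))
    (hc2 : Summable (fun i => c i ^ 2))
    (hdsum : Summable d)
    (xstar : X) (hxstar : xstar ∈ Y)
    (x : ℕ → X) (hx : ∀ n, x n ∈ Y) (u : ℕ → X)
    (a p θ : ℝ) (ha : 0 < a) (hp : 0 < p) (hθ : 0 < θ)
    (hmin : ∀ n, f xstar ≤ f (x n))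
    (hgrad : ∀ n, ∀ y ∈ Y, f (x n) - f y ≤ inner ℝ (u n) (x n - y) + b n)
    (hdesc1 : ∀ n, ‖x (n + 1) - x n‖ ≤ c n)
    (hdesc2 : ∀ n, inner ℝ (α n • u n) (x n - xstar) ≤
      a * inner ℝ (x n - x (n + 1)) (x n - xstar) + d n)
    (hubd : ∀ n, ‖u n‖ ≤ p)
    (hcoef : ∀ n, p * c n + b n ≤ θ * α n) :
    Tendsto (fun n => f (x n)) atTop (nhds (f xstar)) :=
  stmt19_general Y f α b c d hα hdiv hab hc2 hdsum xstar hxstar x hx u a p θ ha hθ hmin hgrad hdesc1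
    hdesc2 hubd hcoef
end
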